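/- arXiv:2304.04955 — 5 statements merged into one kernel-verified Lean document; each statement's English description precedes it below -/
import Mathlib

section
/- Let α > 0, let u be an axially symmetric solution, and set G(x) = (1-x²)u'(x). For j ∈ {0,1,2} define G_j(x) = (-1)^j·(d/dx)^{2j+1}[(1-x²)^j G(x)]. Then G_j(x) ≤ (2j+1)!/α for all x ∈ (-1,1) and all j ∈ {0,1,2}. -/
open Real MeasureTheory intervalIntegral Set Filter Topology

noncomputable section

/-- `γ = ∫_{-1}^1 (1-x²)² e^{6u(x)} dx`. -/
def gammaInt (u : ℝ → ℝ) : ℝ :=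
  ∫ x in (-1 : ℝ)..1, (1 - x ^ 2) ^ 2 * Real.exp (6 * u x)

/-- `u` is an axially symmetric solution: it is C^∞ on an open interval containing `[-1,1]`,
satisfies the fifth-order ODE `-α ((1-x²)³ u')⁽⁵⁾ + 120 - 128 e^{6u}/γ = 0` on `(-1,1)`,
and the mass-center constraint `∫ x (1-x²)² e^{6u} = 0`. -/
def IsAxiSymSolution (α : ℝ) (u : ℝ → ℝ) : Prop :=
  (∃ s : Set ℝ, IsOpen s ∧ Set.Icc (-1 : ℝ) 1 ⊆ s ∧ ContDiffOn ℝ (⊤ : ℕ∞) u s) ∧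
  (∀ x ∈ Set.Ioo (-1 : ℝ) 1,
    -α * iteratedDeriv 5 (fun y : ℝ => (1 - y ^ 2) ^ 3 * deriv u y) x + 120 -
      128 * Real.exp (6 * u x) / gammaInt u = 0) ∧
  (∫ x in (-1 : ℝ)..1, x * (1 - x ^ 2) ^ 2 * Real.exp (6 * u x)) = 0

section Aux

variable {s : Set ℝ} {f : ℝ → ℝ}

lemma iter_smooth (hs : IsOpen s) (hf : ContDiffOn ℝ (⊤ : ℕ∞) f s) (n : ℕ) :
    ContDiffOn ℝ (⊤ : ℕ∞) (iteratedDeriv n f) s := by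
  induction n with
  | zero => simpa [iteratedDeriv_zero] using hf
  | succ n ih =>
      rw [iteratedDeriv_succ]
      exact ih.deriv_of_isOpen hs (by simp)

lemma iter_hasDeriv (hs : IsOpen s) (hf : ContDiffOn ℝ (⊤ : ℕ∞) f s) (n : ℕ) {x : ℝ}
    (hx : x ∈ s) : HasDerivAt (iteratedDeriv n f) (iteratedDeriv (n + 1) f x) x := by
  have hd : DifferentiableAt ℝ (iteratedDeriv n f) x :=
    ((iter_smooth hs hf n).contDiffAt (hs.mem_nhds hx)).differentiableAt (by simp)
  rw [iteratedDeriv_succ]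
  exact hd.hasDerivAt

lemma leibniz (hs : IsOpen s) (hf : ContDiffOn ℝ (⊤ : ℕ∞) f s) (n : ℕ) :
    ∀ x ∈ s, iteratedDeriv n (fun y => (1 - y ^ 2) * f y) x =
      (1 - x ^ 2) * iteratedDeriv n f x - 2 * (n : ℝ) * x * iteratedDeriv (n - 1) f x -
        (n : ℝ) * ((n : ℝ) - 1) * iteratedDeriv (n - 2) f x := by
  induction n with
  | zero => intro x hx; simp [iteratedDeriv_zero]
  | succ n ih =>
    intro x hx
    have hev : iteratedDeriv n (fun y => (1 - y ^ 2) * f y) =ᶠ[nhds x]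
        (fun y => (1 - y ^ 2) * iteratedDeriv n f y -
          2 * (n : ℝ) * y * iteratedDeriv (n - 1) f y -
          (n : ℝ) * ((n : ℝ) - 1) * iteratedDeriv (n - 2) f y) := by
      filter_upwards [hs.mem_nhds hx] with y hy using ih y hy
    have h1 : HasDerivAt (fun y : ℝ => 1 - y ^ 2) (-(2 * x)) x := by
      simpa using (hasDerivAt_pow 2 x).const_sub 1
    have hA := h1.mul (iter_hasDeriv hs hf n hx)
    have hB := (hasDerivAt_id' (x := x)).const_mul (2 * (n : ℝ)) |>.mul
      (iter_hasDeriv hs hf (n - 1) hx)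
    have hC := (iter_hasDeriv hs hf (n - 2) hx).const_mul ((n : ℝ) * ((n : ℝ) - 1))
    have H : HasDerivAt (fun y => (1 - y ^ 2) * iteratedDeriv n f y -
          2 * (n : ℝ) * y * iteratedDeriv (n - 1) f y -
          (n : ℝ) * ((n : ℝ) - 1) * iteratedDeriv (n - 2) f y)
        (-(2 * x) * iteratedDeriv n f x + (1 - x ^ 2) * iteratedDeriv (n + 1) f x -
          (2 * (n : ℝ) * 1 * iteratedDeriv (n - 1) f x +
            2 * (n : ℝ) * x * iteratedDeriv (n - 1 + 1) f x) -
          (n : ℝ) * ((n : ℝ) - 1) * iteratedDeriv (n - 2 + 1) f x) x :=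
      (hA.sub hB).sub hC
    rw [iteratedDeriv_succ, hev.deriv_eq, H.deriv]
    clear hev hA hB hC H ih hf
    rcases n with _ | _ | m
    · norm_num; ring
    · norm_num; ring
    · have e1 : m + 2 - 1 = m + 1 := by omega
      have e2 : m + 2 - 2 = m := by omega
      have e3 : m + 1 + 1 = m + 2 := by omega
      have e4 : m + 2 + 1 = m + 3 := by omega
      have e5 : m + 3 - 1 = m + 2 := by omega
      have e6 : m + 3 - 2 = m + 1 := by omega
      have e7 : m + 0 + 1 = m + 1 := by omega
      simp only [e1, e2, e3, e4, e5, e6, e7]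
      push_cast
      ring

end Aux

lemma max_principle (a b : ℝ) (ha : 0 < a) (hb : 0 ≤ b) (w w1 w2 : ℝ → ℝ)
    (hw1 : ∀ x ∈ Icc (-1 : ℝ) 1, HasDerivAt w (w1 x) x)
    (hw2 : ∀ x ∈ Icc (-1 : ℝ) 1, HasDerivAt w1 (w2 x) x)
    (hw2c : ContinuousOn w2 (Icc (-1 : ℝ) 1))
    (hineq : ∀ x ∈ Ioo (-1 : ℝ) 1, (1 - x ^ 2) * w2 x - b * x * w1 x - a * w x ≤ 0) :
    ∀ x ∈ Icc (-1 : ℝ) 1, 0 ≤ w x := by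
  have hwc : ContinuousOn w (Icc (-1 : ℝ) 1) :=
    fun x hx => ((hw1 x hx).continuousAt).continuousWithinAt
  by_contra hcon
  push_neg at hcon
  obtain ⟨z, hz, hzneg⟩ := hcon
  obtain ⟨x₀, hx₀, hmin⟩ :=
    isCompact_Icc.exists_isMinOn (Set.nonempty_Icc.mpr (by norm_num)) hwc
  have hneg : w x₀ < 0 := lt_of_le_of_lt (isMinOn_iff.mp hmin z hz) hzneg
  rcases eq_or_lt_of_le hx₀.1 with hL | hL
  · -- x₀ = -1
    have hL' : x₀ = -1 := hL.symm
    subst hL'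
    have hmem : (-1 : ℝ) ∈ Icc (-1 : ℝ) 1 := by norm_num
    have hsl : Tendsto (slope w (-1)) (𝓝[>] (-1 : ℝ)) (𝓝 (w1 (-1))) :=
      (hasDerivAt_iff_tendsto_slope.mp (hw1 (-1) hmem)).mono_left
        (nhdsWithin_mono _ fun y hy => ne_of_gt hy)
    have hw1ge : 0 ≤ w1 (-1) := by
      refine ge_of_tendsto hsl ?_
      filter_upwards [Ioo_mem_nhdsGT_of_mem (by norm_num : (-1 : ℝ) ∈ Ico (-1 : ℝ) 1)]
        with y hy
      have h0 : 0 ≤ w y - w (-1) :=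
        sub_nonneg.mpr (isMinOn_iff.mp hmin y (Ioo_subset_Icc_self hy))
      have hd : 0 < y - (-1) := by linarith [hy.1]
      rw [slope_def_field]
      positivity
    have hne : 𝓝[Ioo (-1 : ℝ) 1] (-1 : ℝ) = 𝓝[>] (-1 : ℝ) :=
      nhdsWithin_Ioo_eq_nhdsGT (by norm_num)
    have hΦt : Tendsto (fun x => (1 - x ^ 2) * w2 x - b * x * w1 x - a * w x)
        (𝓝[Ioo (-1 : ℝ) 1] (-1 : ℝ))
        (𝓝 ((1 - (-1 : ℝ) ^ 2) * w2 (-1) - b * (-1) * w1 (-1) - a * w (-1))) := by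
      have c2 : ContinuousWithinAt w2 (Ioo (-1 : ℝ) 1) (-1) :=
        (hw2c (-1) hmem).mono Ioo_subset_Icc_self
      have c1 : ContinuousWithinAt w1 (Ioo (-1 : ℝ) 1) (-1) :=
        ((hw2 (-1) hmem).continuousAt).continuousWithinAt
      have c0 : ContinuousWithinAt w (Ioo (-1 : ℝ) 1) (-1) :=
        ((hw1 (-1) hmem).continuousAt).continuousWithinAt
      exact (((continuousWithinAt_const.sub (continuousWithinAt_id.pow 2)).mul c2).sub
        ((continuousWithinAt_const.mul continuousWithinAt_id).mul c1)).sub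
        (continuousWithinAt_const.mul c0)
    rw [hne] at hΦt
    have hΦ1 : (1 - (-1 : ℝ) ^ 2) * w2 (-1) - b * (-1) * w1 (-1) - a * w (-1) ≤ 0 := by
      refine le_of_tendsto hΦt ?_
      filter_upwards [Ioo_mem_nhdsGT_of_mem (by norm_num : (-1 : ℝ) ∈ Ico (-1 : ℝ) 1)]
        with y hy using hineq y hy
    nlinarith [mul_nonneg hb hw1ge, mul_pos ha (neg_pos.mpr hneg)]
  rcases eq_or_lt_of_le hx₀.2 with hR | hR
  · -- x₀ = 1
    subst hR
    have hmem : (1 : ℝ) ∈ Icc (-1 : ℝ) 1 := by norm_num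
    have hsl : Tendsto (slope w 1) (𝓝[<] (1 : ℝ)) (𝓝 (w1 1)) :=
      (hasDerivAt_iff_tendsto_slope.mp (hw1 1 hmem)).mono_left
        (nhdsWithin_mono _ fun y hy => ne_of_lt hy)
    have hw1le : w1 1 ≤ 0 := by
      refine le_of_tendsto hsl ?_
      filter_upwards [Ioo_mem_nhdsLT_of_mem (by norm_num : (1 : ℝ) ∈ Ioc (-1 : ℝ) 1)]
        with y hy
      have h0 : 0 ≤ w y - w 1 :=
        sub_nonneg.mpr (isMinOn_iff.mp hmin y (Ioo_subset_Icc_self hy))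
      have hd : y - 1 < 0 := by linarith [hy.2]
      rw [slope_def_field]
      exact div_nonpos_of_nonneg_of_nonpos h0 hd.le
    have hne : 𝓝[Ioo (-1 : ℝ) 1] (1 : ℝ) = 𝓝[<] (1 : ℝ) :=
      nhdsWithin_Ioo_eq_nhdsLT (by norm_num)
    have hΦt : Tendsto (fun x => (1 - x ^ 2) * w2 x - b * x * w1 x - a * w x)
        (𝓝[Ioo (-1 : ℝ) 1] (1 : ℝ))
        (𝓝 ((1 - (1 : ℝ) ^ 2) * w2 1 - b * 1 * w1 1 - a * w 1)) := by
      have c2 : ContinuousWithinAt w2 (Ioo (-1 : ℝ) 1) 1 :=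
        (hw2c 1 hmem).mono Ioo_subset_Icc_self
      have c1 : ContinuousWithinAt w1 (Ioo (-1 : ℝ) 1) 1 :=
        ((hw2 1 hmem).continuousAt).continuousWithinAt
      have c0 : ContinuousWithinAt w (Ioo (-1 : ℝ) 1) 1 :=
        ((hw1 1 hmem).continuousAt).continuousWithinAt
      exact (((continuousWithinAt_const.sub (continuousWithinAt_id.pow 2)).mul c2).sub
        ((continuousWithinAt_const.mul continuousWithinAt_id).mul c1)).sub
        (continuousWithinAt_const.mul c0)
    rw [hne] at hΦt
    have hΦ1 : (1 - (1 : ℝ) ^ 2) * w2 1 - b * 1 * w1 1 - a * w 1 ≤ 0 := by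
      refine le_of_tendsto hΦt ?_
      filter_upwards [Ioo_mem_nhdsLT_of_mem (by norm_num : (1 : ℝ) ∈ Ioc (-1 : ℝ) 1)]
        with y hy using hineq y hy
    nlinarith [mul_nonneg hb (neg_nonneg.mpr hw1le), mul_pos ha (neg_pos.mpr hneg)]
  · -- interior
    have hloc : IsLocalMin w x₀ := hmin.isLocalMin (Icc_mem_nhds hL hR)
    have h10 : w1 x₀ = 0 := by
      rw [← (hw1 x₀ hx₀).deriv]
      exact hloc.deriv_eq_zero
    have hpos : 0 < 1 - x₀ ^ 2 := by nlinarith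
    have h2neg : w2 x₀ < 0 := by
      by_contra hcon2
      push_neg at hcon2
      have h := hineq x₀ ⟨hL, hR⟩
      rw [h10] at h
      have h1' := mul_nonneg hpos.le hcon2
      have h2' := mul_neg_of_pos_of_neg ha hneg
      nlinarith
    have hslope : Tendsto (slope w1 x₀) (𝓝[>] x₀) (𝓝 (w2 x₀)) :=
      (hasDerivAt_iff_tendsto_slope.mp (hw2 x₀ hx₀)).mono_left
        (nhdsWithin_mono _ fun y hy => ne_of_gt hy)
    have hev : ∀ᶠ y in 𝓝[>] x₀, w1 y < 0 := by
      have h' : ∀ᶠ y in 𝓝[>] x₀, slope w1 x₀ y < 0 :=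
        hslope.eventually_lt_const h2neg
      filter_upwards [h', self_mem_nhdsWithin] with y hy hy'
      rw [slope_def_field, h10, sub_zero] at hy
      have hd : 0 < y - x₀ := sub_pos.mpr hy'
      rcases div_neg_iff.mp hy with ⟨_, h2⟩ | ⟨h1', _⟩
      · linarith
      · exact h1'
    obtain ⟨c', hc', hsub⟩ := mem_nhdsGT_iff_exists_Ioc_subset.mp hev
    set c := min c' 1 with hcdef
    have hcx : x₀ < c := lt_min hc' hR
    have hc1 : c ≤ 1 := min_le_right _ _
    have hIccsub : Icc x₀ c ⊆ Icc (-1 : ℝ) 1 := Icc_subset_Icc hx₀.1 hc1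
    have hanti : StrictAntiOn w (Icc x₀ c) := by
      apply strictAntiOn_of_deriv_neg (convex_Icc _ _) (hwc.mono hIccsub)
      intro y hy
      rw [interior_Icc] at hy
      rw [(hw1 y (hIccsub (Ioo_subset_Icc_self hy))).deriv]
      exact hsub ⟨hy.1, le_trans hy.2.le (min_le_left _ _)⟩
    have hlt : w c < w x₀ :=
      hanti (left_mem_Icc.mpr hcx.le) (right_mem_Icc.mpr hcx.le) hcx
    have hge : w x₀ ≤ w c := isMinOn_iff.mp hmin c (hIccsub (right_mem_Icc.mpr hcx.le))
    linarith

/-- `G_j := (-1)^j ((1-x²)^j G)^{(2j+1)} ≤ (2j+1)!/α` on `(-1,1)` for `j = 0,1,2`,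
where `G = (1-x²)u'`. -/
theorem Gj_upper_bound (α : ℝ) (u G : ℝ → ℝ) (hα : 0 < α)
    (hu : IsAxiSymSolution α u)
    (hG : ∀ x, G x = (1 - x ^ 2) * deriv u x) :
    ∀ j : ℕ, j ≤ 2 → ∀ x ∈ Set.Ioo (-1 : ℝ) 1,
      (-1 : ℝ) ^ j * iteratedDeriv (2 * j + 1) (fun y : ℝ => (1 - y ^ 2) ^ j * G y) x ≤
        (Nat.factorial (2 * j + 1) : ℝ) / α := by
  obtain ⟨⟨s, hs_open, hs_sub, hu_s⟩, hODE, -⟩ := hu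
  have hfC : ContDiffOn ℝ (⊤ : ℕ∞) (deriv u) s := hu_s.deriv_of_isOpen hs_open (by simp)
  have hpoly : ContDiff ℝ (⊤ : ℕ∞) (fun y : ℝ => 1 - y ^ 2) :=
    contDiff_const.sub (contDiff_id.pow 2)
  set F0 : ℝ → ℝ := fun y => (1 - y ^ 2) * deriv u y with hF0
  set F1 : ℝ → ℝ := fun y => (1 - y ^ 2) * F0 y with hF1
  set F2 : ℝ → ℝ := fun y => (1 - y ^ 2) * F1 y with hF2
  have hF0C : ContDiffOn ℝ (⊤ : ℕ∞) F0 s := (hpoly.contDiffOn).mul hfC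
  have hF1C : ContDiffOn ℝ (⊤ : ℕ∞) F1 s := (hpoly.contDiffOn).mul hF0C
  have hγ : 0 < gammaInt u := by
    have hcont : ContinuousOn (fun x : ℝ => (1 - x ^ 2) ^ 2 * Real.exp (6 * u x))
        (Icc (-1 : ℝ) 1) :=
      (hpoly.continuous.pow 2).continuousOn.mul
        (Real.continuous_exp.comp_continuousOn
          (continuousOn_const.mul (hu_s.continuousOn.mono hs_sub)))
    apply intervalIntegral.intervalIntegral_pos_of_pos_on
    · apply ContinuousOn.intervalIntegrable
      rwa [uIcc_of_le (by norm_num : (-1 : ℝ) ≤ 1)]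
    · intro x hx
      have h2 : (0 : ℝ) < 1 - x ^ 2 := by nlinarith [hx.1, hx.2]
      positivity
    · norm_num
  have hODE' : ∀ x ∈ Ioo (-1 : ℝ) 1, iteratedDeriv 5 F2 x =
      (120 - 128 * Real.exp (6 * u x) / gammaInt u) / α := by
    intro x hx
    have h := hODE x hx
    have heq : (fun y : ℝ => (1 - y ^ 2) ^ 3 * deriv u y) = F2 := by
      funext y; simp only [hF2, hF1, hF0]; ring
    rw [heq] at h
    rw [eq_div_iff hα.ne']
    linarith
  have hUB : ∀ x ∈ Ioo (-1 : ℝ) 1, iteratedDeriv 5 F2 x ≤ 120 / α := by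
    intro x hx
    rw [hODE' x hx]
    have h0 : 0 ≤ 128 * Real.exp (6 * u x) / gammaInt u :=
      div_nonneg (by positivity) hγ.le
    gcongr
    linarith
  have key1 : ∀ x ∈ Icc (-1 : ℝ) 1, 0 ≤ iteratedDeriv 3 F1 x + 6 / α := by
    refine max_principle 20 10 (by norm_num) (by norm_num)
      (fun x => iteratedDeriv 3 F1 x + 6 / α) (iteratedDeriv 4 F1) (iteratedDeriv 5 F1)
      (fun x hx => (iter_hasDeriv hs_open hF1C 3 (hs_sub hx)).add_const _)
      (fun x hx => iter_hasDeriv hs_open hF1C 4 (hs_sub hx))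
      ((iter_smooth hs_open hF1C 5).continuousOn.mono hs_sub) ?_
    intro x hx
    have hl := leibniz hs_open hF1C 5 x (hs_sub (Ioo_subset_Icc_self hx))
    rw [← hF2] at hl
    have hb := hUB x hx
    have h120 : (120 : ℝ) / α = 20 * (6 / α) := by ring
    norm_num at hl
    linarith
  have key2 : ∀ x ∈ Icc (-1 : ℝ) 1, 0 ≤ 1 / α - iteratedDeriv 1 F0 x := by
    refine max_principle 6 6 (by norm_num) (by norm_num)
      (fun x => 1 / α - iteratedDeriv 1 F0 x) (fun x => -iteratedDeriv 2 F0 x)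
      (fun x => -iteratedDeriv 3 F0 x)
      (fun x hx => (iter_hasDeriv hs_open hF0C 1 (hs_sub hx)).const_sub _)
      (fun x hx => (iter_hasDeriv hs_open hF0C 2 (hs_sub hx)).neg)
      (((iter_smooth hs_open hF0C 3).continuousOn.mono hs_sub).neg) ?_
    intro x hx
    have hl := leibniz hs_open hF0C 3 x (hs_sub (Ioo_subset_Icc_self hx))
    rw [← hF1] at hl
    have h1 := key1 x (Ioo_subset_Icc_self hx)
    norm_num at hl
    beta_reduce
    simp only [iteratedDeriv_one] at hl ⊢
    have hdiv : 6 * (1 / α) = 6 / α := by ring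
    linarith
  intro j hj x hx
  interval_cases j
  · have heq : (fun y : ℝ => (1 - y ^ 2) ^ 0 * G y) = F0 := by
      funext y; simp only [hF0, pow_zero, one_mul, hG y]
    rw [heq]
    have h2 := key2 x (Ioo_subset_Icc_self hx)
    simp only [iteratedDeriv_one, one_div] at h2
    norm_num [Nat.factorial]
    linarith
  · have heq : (fun y : ℝ => (1 - y ^ 2) ^ 1 * G y) = F1 := by
      funext y; simp only [hF1, hF0, pow_one, hG y]
    rw [heq]
    have h1 := key1 x (Ioo_subset_Icc_self hx)
    norm_num [Nat.factorial]
    linarith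
  · have heq : (fun y : ℝ => (1 - y ^ 2) ^ 2 * G y) = F2 := by
      funext y; simp only [hF2, hF1, hF0, hG y]; ring
    rw [heq]
    have h2 := hUB x hx
    norm_num [Nat.factorial]
    linarith
end
end

section
/- Let α > 0, let u be an axially symmetric solution, and set G(x) = (1-x²)u'(x). Define Ĝ(x) = -15(1-x²)G'''(x) + 120x·G''(x) + 150·G'(x) and G̃(x) = -15(1-x²)G'''(x) + 120x·G''(x) + 160·G'(x). Then Ĝ(x) ≤ 150/α for all x ∈ (-1,1), and consequently G̃(x) ≤ 160/α for all x ∈ (-1,1). -/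
/-!
Put `F = (1 - t²)³ u' = (1 - t²)² G`; the equation says `α F⁽⁵⁾ = 120 - 128 e^{6u} / γ ≤ 120`.
Fix `x ∈ (-1, 1)` and integrate `F⁽⁵⁾` against a nonnegative quartic weight with a triple zero
at `-1` over `[-1, x]`, and against one with a triple zero at `1` over `[x, 1]`. After five
integrations by parts nothing survives at `±1`, since `F` and `F'` vanish there, and for suitable
weights the boundary terms at `x` add up to `(1 - x²)³ Ĝ(x)` (resp. `(1 - x²)³ G̃(x)`). Bounding
`F⁽⁵⁾` by `120 / α` under the integrals and integrating the weights gives the two estimates.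
-/

open Real MeasureTheory intervalIntegral Set

noncomputable section

open Polynomial
open scoped ContDiff

section IteratedDeriv

variable {𝕜 : Type*} [NontriviallyNormedField 𝕜] {E : Type*} [NormedAddCommGroup E]
  [NormedSpace 𝕜 E] {F : 𝕜 → E} {s : Set 𝕜}

theorem ContDiffOn.contDiffOn_iteratedDeriv_of_isOpen (hF : ContDiffOn 𝕜 ∞ F s)
    (hs : IsOpen s) : ∀ k : ℕ, ContDiffOn 𝕜 ∞ (iteratedDeriv k F) s
  | 0 => by simpa using hF
  | k + 1 => by
    rw [iteratedDeriv_succ]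
    exact (hF.contDiffOn_iteratedDeriv_of_isOpen hs k).deriv_of_isOpen hs le_rfl

theorem ContDiffOn.hasDerivAt_iteratedDeriv (hF : ContDiffOn 𝕜 ∞ F s) (hs : IsOpen s) (k : ℕ)
    {t : 𝕜} (ht : t ∈ s) : HasDerivAt (iteratedDeriv k F) (iteratedDeriv (k + 1) F t) t := by
  rw [iteratedDeriv_succ]
  exact (((hF.contDiffOn_iteratedDeriv_of_isOpen hs k).contDiffAt
    (hs.mem_nhds ht)).differentiableAt (by simp)).hasDerivAt

end IteratedDeriv

section PolynomialWeights

variable {𝕜 : Type*} [NontriviallyNormedField 𝕜]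

theorem Polynomial.iteratedDeriv_eval (p : 𝕜[X]) :
    ∀ k : ℕ, iteratedDeriv k (fun t => p.eval t) = fun t => (derivative^[k] p).eval t
  | 0 => by simp
  | k + 1 => by
    ext t
    rw [iteratedDeriv_succ, p.iteratedDeriv_eval k, Function.iterate_succ_apply']
    exact Polynomial.deriv _

theorem Polynomial.iteratedDeriv_eval_mul (p : 𝕜[X]) {G : 𝕜 → 𝕜} {k : ℕ} {x : 𝕜}
    (hG : ContDiffAt 𝕜 k G x) :
    iteratedDeriv k (fun t => p.eval t * G t) x = ∑ i ∈ Finset.range (k + 1),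
      k.choose i * (derivative^[i] p).eval x * iteratedDeriv (k - i) G x := by
  have hp : ContDiffAt 𝕜 k (fun t => p.eval t) x := (p.contDiff_aeval (R := 𝕜) k).contDiffAt
  simp [iteratedDeriv_fun_mul hp hG, p.iteratedDeriv_eval]

theorem Polynomial.integral_eval_eq_sub {p P : ℝ[X]} (hP : derivative P = p) (a b : ℝ) :
    ∫ t in a..b, p.eval t = P.eval b - P.eval a :=
  integral_eq_sub_of_hasDerivAt (fun t _ => hP ▸ P.hasDerivAt t)
    (p.continuous.intervalIntegrable _ _)

end PolynomialWeights

section IntegrationByParts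

variable {F : ℝ → ℝ} {s : Set ℝ}

/-- `ibpBoundary p F n = ∑_{k<n} (-1)ᵏ p⁽ᵏ⁾ F⁽ⁿ⁻¹⁻ᵏ⁾`, the boundary term of `n` integrations
by parts in `∫ p F⁽ⁿ⁾`. -/
def ibpBoundary (p : ℝ[X]) (F : ℝ → ℝ) : ℕ → ℝ → ℝ
  | 0, _ => 0
  | n + 1, t => p.eval t * iteratedDeriv n F t - ibpBoundary (derivative p) F n t

theorem hasDerivAt_ibpBoundary (hF : ContDiffOn ℝ ∞ F s) (hs : IsOpen s) (p : ℝ[X]) (n : ℕ)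
    {t : ℝ} (ht : t ∈ s) :
    HasDerivAt (ibpBoundary p F n)
      (p.eval t * iteratedDeriv n F t - (-1) ^ n * (derivative^[n] p).eval t * F t) t := by
  induction n generalizing p with
  | zero => exact (hasDerivAt_const t (0 : ℝ)).congr_deriv (by simp)
  | succ n ih =>
    have h := ((p.hasDerivAt t).mul (hF.hasDerivAt_iteratedDeriv hs n ht)).sub
      (ih (derivative p))
    rw [Function.iterate_succ_apply]
    exact h.congr_deriv (by ring)

theorem integral_eval_mul_iteratedDeriv (hF : ContDiffOn ℝ ∞ F s) (hs : IsOpen s) {p : ℝ[X]}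
    {n : ℕ} (hp : p.natDegree < n) {a b : ℝ} (hab : uIcc a b ⊆ s) :
    ∫ t in a..b, p.eval t * iteratedDeriv n F t = ibpBoundary p F n b - ibpBoundary p F n a := by
  refine integral_eq_sub_of_hasDerivAt (fun t ht => ?_) ?_
  · simpa [iterate_derivative_eq_zero hp] using hasDerivAt_ibpBoundary hF hs p n (hab ht)
  · exact (p.continuous.continuousOn.mul
      ((hF.contDiffOn_iteratedDeriv_of_isOpen hs n).continuousOn.mono hab)).intervalIntegrable

theorem ibpBoundary_eq_zero {p : ℝ[X]} {a : ℝ} {m n : ℕ} (hp : (X - C a) ^ m ∣ p)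
    (hF : ∀ j < n - m, iteratedDeriv j F a = 0) : ibpBoundary p F n a = 0 := by
  induction n generalizing p m with
  | zero => rfl
  | succ n ih =>
    have hlead : p.eval a * iteratedDeriv n F a = 0 := by
      rcases m with _ | m
      · simp [hF n (by omega)]
      · have hroot : p.IsRoot a :=
          dvd_iff_isRoot.mp (dvd_trans (dvd_pow_self _ m.succ_ne_zero) hp)
        simp [hroot.eq_zero]
    have htail := ih (pow_sub_one_dvd_derivative_of_pow_dvd hp) fun j hj => hF j (by omega)
    simp [ibpBoundary, hlead, htail]

theorem ibpBoundary_sub_le (hF : ContDiffOn ℝ ∞ F s) (hs : IsOpen s) {p : ℝ[X]} {n : ℕ}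
    (hp : p.natDegree < n) {a b M : ℝ} (hab : a ≤ b) (hsub : Icc a b ⊆ s)
    (hp₀ : ∀ t ∈ Icc a b, 0 ≤ p.eval t) (hM : ∀ t ∈ Ioo a b, iteratedDeriv n F t ≤ M) :
    ibpBoundary p F n b - ibpBoundary p F n a ≤ M * ∫ t in a..b, p.eval t := by
  rw [← uIcc_of_le hab] at hsub
  rw [← integral_eval_mul_iteratedDeriv hF hs hp hsub, ← intervalIntegral.integral_const_mul]
  refine integral_mono_on_of_le_Ioo hab ?_ ((p.continuous.const_mul M).intervalIntegrable _ _)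
    fun t ht => ?_
  · exact (p.continuous.continuousOn.mul
      ((hF.contDiffOn_iteratedDeriv_of_isOpen hs n).continuousOn.mono hsub)).intervalIntegrable
  · rw [mul_comm M]
    exact mul_le_mul_of_nonneg_left (hM t ht) (hp₀ t (Ioo_subset_Icc_self ht))

theorem ibpBoundary_sub_ibpBoundary_le (hF : ContDiffOn ℝ ∞ F s) (hs : IsOpen s) {a b x M : ℝ}
    {m n : ℕ} {p q : ℝ[X]} (hsub : Icc a b ⊆ s) (hx : x ∈ Icc a b)
    (hFa : ∀ j < n - m, iteratedDeriv j F a = 0) (hFb : ∀ j < n - m, iteratedDeriv j F b = 0)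
    (hM : ∀ t ∈ Ioo a b, iteratedDeriv n F t ≤ M) (hpa : (X - C a) ^ m ∣ p)
    (hqb : (X - C b) ^ m ∣ q) (hp : p.natDegree < n) (hq : q.natDegree < n)
    (hp₀ : ∀ t ∈ Icc a x, 0 ≤ p.eval t) (hq₀ : ∀ t ∈ Icc x b, 0 ≤ q.eval t) :
    ibpBoundary p F n x - ibpBoundary q F n x ≤
      M * ((∫ t in a..x, p.eval t) + ∫ t in x..b, q.eval t) := by
  have hleft := ibpBoundary_sub_le hF hs hp hx.1 ((Icc_subset_Icc_right hx.2).trans hsub) hp₀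
    fun t ht => hM t ⟨ht.1, ht.2.trans_le hx.2⟩
  have hright := ibpBoundary_sub_le hF hs hq hx.2 ((Icc_subset_Icc_left hx.1).trans hsub) hq₀
    fun t ht => hM t ⟨hx.1.trans_lt ht.1, ht.2⟩
  rw [ibpBoundary_eq_zero hpa hFa] at hleft
  rw [ibpBoundary_eq_zero hqb hFb] at hright
  linarith

end IntegrationByParts

section Profile

variable {G : ℝ → ℝ} {s : Set ℝ}

theorem iteratedDeriv_one_sub_sq_sq_mul {k : ℕ} {x : ℝ} (hG : ContDiffAt ℝ k G x) :
    iteratedDeriv k (fun t => (1 - t ^ 2) ^ 2 * G t) x =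
      ∑ i ∈ Finset.range (k + 1),
        k.choose i * (derivative^[i] ((1 - X ^ 2) ^ 2 : ℝ[X])).eval x * iteratedDeriv (k - i) G x := by
  have hF : (fun t => (1 - t ^ 2) ^ 2 * G t) =
      fun t => ((1 - X ^ 2) ^ 2 : ℝ[X]).eval t * G t := by
    simp
  rw [hF, Polynomial.iteratedDeriv_eval_mul _ hG]

theorem iteratedDeriv_one_sub_sq_sq_mul_eq_zero {a : ℝ} (ha : a ^ 2 = 1)
    (hG : ContDiffAt ℝ 1 G a) {j : ℕ} (hj : j < 2) :
    iteratedDeriv j (fun t => (1 - t ^ 2) ^ 2 * G t) a = 0 := by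
  rw [iteratedDeriv_one_sub_sq_sq_mul (hG.of_le (by exact_mod_cast (by omega : j ≤ 1)))]
  interval_cases j <;>
    simp [Finset.sum_range_succ, derivative_pow, ha]

theorem le_mul_of_weights (hs : IsOpen s) (hsub : Icc (-1 : ℝ) 1 ⊆ s)
    (hG : ContDiffOn ℝ ∞ G s) {M : ℝ}
    (hM : ∀ t ∈ Ioo (-1 : ℝ) 1, iteratedDeriv 5 (fun t => (1 - t ^ 2) ^ 2 * G t) t ≤ M)
    {x c L : ℝ} (hx : x ∈ Ioo (-1 : ℝ) 1) {p q : ℝ[X]}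
    (hp : (X + 1) ^ 3 ∣ p) (hq : (1 - X) ^ 3 ∣ q) (hpd : p.natDegree ≤ 4) (hqd : q.natDegree ≤ 4)
    (hp₀ : ∀ t ∈ Icc (-1) x, 0 ≤ p.eval t) (hq₀ : ∀ t ∈ Icc x 1, 0 ≤ q.eval t)
    (hL : ibpBoundary p (fun t => (1 - t ^ 2) ^ 2 * G t) 5 x -
      ibpBoundary q (fun t => (1 - t ^ 2) ^ 2 * G t) 5 x = (1 - x ^ 2) ^ 3 * L)
    (hc : (∫ t in (-1)..x, p.eval t) + (∫ t in x..1, q.eval t) = c * (1 - x ^ 2) ^ 3) :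
    L ≤ c * M := by
  have hF : ContDiffOn ℝ ∞ (fun t => (1 - t ^ 2) ^ 2 * G t) s :=
    (((contDiff_const.sub (contDiff_id.pow 2)).pow 2).contDiffOn).mul hG
  have hvanish : ∀ a ∈ Icc (-1 : ℝ) 1, a ^ 2 = 1 → ∀ j < 5 - 3,
      iteratedDeriv j (fun t => (1 - t ^ 2) ^ 2 * G t) a = 0 := fun a ha ha₁ j hj =>
    iteratedDeriv_one_sub_sq_sq_mul_eq_zero ha₁
      ((hG.contDiffAt (hs.mem_nhds (hsub ha))).of_le (by exact_mod_cast le_top)) hj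
  have hq' : (X - C 1) ^ 3 ∣ q := by
    rw [show (X - C 1 : ℝ[X]) ^ 3 = -(1 - X) ^ 3 by simp; ring]
    exact neg_dvd.mpr hq
  have key := ibpBoundary_sub_ibpBoundary_le hF hs hsub (Ioo_subset_Icc_self hx)
    (hvanish (-1) (by norm_num) (by norm_num)) (hvanish 1 (by norm_num) (by norm_num)) hM
    (by simpa using hp) hq' (by omega) (by omega) hp₀ hq₀
  rw [hL, hc] at key
  have hpos : 0 < (1 - x ^ 2) ^ 3 := pow_pos (by nlinarith [hx.1, hx.2]) 3
  exact le_of_mul_le_mul_left (by linarith) hpos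

theorem Ghat_le (hs : IsOpen s) (hsub : Icc (-1 : ℝ) 1 ⊆ s) (hG : ContDiffOn ℝ ∞ G s) {M : ℝ}
    (hM : ∀ t ∈ Ioo (-1 : ℝ) 1, iteratedDeriv 5 (fun t => (1 - t ^ 2) ^ 2 * G t) t ≤ M)
    {x : ℝ} (hx : x ∈ Ioo (-1 : ℝ) 1) :
    -15 * (1 - x ^ 2) * iteratedDeriv 3 G x + 120 * x * iteratedDeriv 2 G x
      + 150 * deriv G x ≤ 5 / 4 * M := by
  have hGx : ∀ k : ℕ, ContDiffAt ℝ k G x := fun k =>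
    (hG.contDiffAt (hs.mem_nhds (hsub (Ioo_subset_Icc_self hx)))).of_le (by exact_mod_cast le_top)
  refine le_mul_of_weights hs hsub hG hM hx (p := C (5 / 2 * (1 - x) ^ 3) * (X + 1) ^ 3)
    (q := C (5 / 2 * (1 + x) ^ 3) * (1 - X) ^ 3) (dvd_mul_left _ _) (dvd_mul_left _ _)
    (by compute_degree!) (by compute_degree!) (fun t ht => ?_) (fun t ht => ?_) ?_ ?_
  · have : 0 ≤ t + 1 := by linarith [ht.1]
    have : 0 ≤ 1 - x := by linarith [hx.2]
    simp only [eval_mul, eval_C, eval_pow, eval_add, eval_X, eval_one]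
    positivity
  · have : 0 ≤ 1 - t := by linarith [ht.2]
    have : 0 ≤ 1 + x := by linarith [hx.1]
    simp only [eval_mul, eval_C, eval_pow, eval_sub, eval_X, eval_one]
    positivity
  · -- Unfolding `derivative^[k]` by hand first: left to `simp`, it is closed by `rfl` proofs
    -- that the kernel checks only very slowly.
    simp only [ibpBoundary, iteratedDeriv_one_sub_sq_sq_mul (hGx _), Finset.sum_range_succ,
      Finset.sum_range_zero, Function.iterate_succ_apply', Function.iterate_zero_apply]
    simp [derivative_pow]
    ring
  · rw [integral_eval_eq_sub (P := C (5 / 8 * (1 - x) ^ 3) * (X + 1) ^ 4),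
      integral_eval_eq_sub (P := C (-5 / 8 * (1 + x) ^ 3) * (1 - X) ^ 4)]
    · simp
      ring
    all_goals
      refine Polynomial.funext fun t => ?_
      simp [derivative_pow]
      ring

theorem Gtilde_le (hs : IsOpen s) (hsub : Icc (-1 : ℝ) 1 ⊆ s) (hG : ContDiffOn ℝ ∞ G s) {M : ℝ}
    (hM : ∀ t ∈ Ioo (-1 : ℝ) 1, iteratedDeriv 5 (fun t => (1 - t ^ 2) ^ 2 * G t) t ≤ M)
    {x : ℝ} (hx : x ∈ Ioo (-1 : ℝ) 1) :
    -15 * (1 - x ^ 2) * iteratedDeriv 3 G x + 120 * x * iteratedDeriv 2 G x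
      + 160 * deriv G x ≤ 4 / 3 * M := by
  have hGx : ∀ k : ℕ, ContDiffAt ℝ k G x := fun k =>
    (hG.contDiffAt (hs.mem_nhds (hsub (Ioo_subset_Icc_self hx)))).of_le (by exact_mod_cast le_top)
  refine le_mul_of_weights hs hsub hG hM hx
    (p := C (5 / 48 * (1 - x) ^ 3) * (X + 1) ^ 3 * (C (25 + 3 * x) - C (3 + x) * X))
    (q := C (5 / 48 * (1 + x) ^ 3) * (1 - X) ^ 3 * (C (25 - 3 * x) + C (3 - x) * X))
    (dvd_mul_of_dvd_left (dvd_mul_left _ _) _) (dvd_mul_of_dvd_left (dvd_mul_left _ _) _)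
    (by compute_degree!) (by compute_degree!) (fun t ht => ?_) (fun t ht => ?_) ?_ ?_
  · have : 0 ≤ t + 1 := by linarith [ht.1]
    have : 0 ≤ 1 - x := by linarith [hx.2]
    have : 0 ≤ 25 + 3 * x - (3 + x) * t := by nlinarith [ht.2, hx.1, hx.2]
    simp only [eval_mul, eval_C, eval_pow, eval_add, eval_sub, eval_X, eval_one]
    positivity
  · have : 0 ≤ 1 - t := by linarith [ht.2]
    have : 0 ≤ 1 + x := by linarith [hx.1]
    have : 0 ≤ 25 - 3 * x + (3 - x) * t := by nlinarith [ht.1, hx.1, hx.2]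
    simp only [eval_mul, eval_C, eval_pow, eval_add, eval_sub, eval_X, eval_one]
    positivity
  · simp only [ibpBoundary, iteratedDeriv_one_sub_sq_sq_mul (hGx _), Finset.sum_range_succ,
      Finset.sum_range_zero, Function.iterate_succ_apply', Function.iterate_zero_apply]
    simp [derivative_pow]
    ring
  · rw [integral_eval_eq_sub (P := C (5 / 48 * (1 - x) ^ 3) *
        (C ((28 + 4 * x) / 4) * (X + 1) ^ 4 - C ((3 + x) / 5) * (X + 1) ^ 5)),
      integral_eval_eq_sub (P := C (5 / 48 * (1 + x) ^ 3) *
        (C ((3 - x) / 5) * (1 - X) ^ 5 - C ((28 - 4 * x) / 4) * (1 - X) ^ 4))]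
    · simp
      ring
    all_goals
      refine Polynomial.funext fun t => ?_
      simp [derivative_pow]
      ring

end Profile

theorem gammaInt_nonneg (u : ℝ → ℝ) : 0 ≤ gammaInt u :=
  integral_nonneg (by norm_num) fun x _ => by positivity

theorem IsAxiSymSolution.iteratedDeriv_five_le {α : ℝ} {u : ℝ → ℝ} (hα : 0 < α)
    (hu : IsAxiSymSolution α u) {x : ℝ} (hx : x ∈ Ioo (-1 : ℝ) 1) :
    iteratedDeriv 5 (fun y => (1 - y ^ 2) ^ 3 * deriv u y) x ≤ 120 / α := by
  have hexp : 0 ≤ 128 * exp (6 * u x) / gammaInt u :=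
    div_nonneg (by positivity) (gammaInt_nonneg u)
  rw [le_div_iff₀' hα]
  linarith [hu.2.1 x hx]

/-- with `G = (1-x²)u'`, the functions
`Ĝ = -15(1-x²)G''' + 120xG'' + 150G'` and `G̃ = -15(1-x²)G''' + 120xG'' + 160G'`
satisfy `Ĝ ≤ 150/α` and `G̃ ≤ 160/α` on `(-1,1)`. -/
theorem Ghat_Gtilde_bound (α : ℝ) (u G : ℝ → ℝ) (hα : 0 < α)
    (hu : IsAxiSymSolution α u)
    (hG : ∀ x, G x = (1 - x ^ 2) * deriv u x) :
    (∀ x ∈ Set.Ioo (-1 : ℝ) 1,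
      -15 * (1 - x ^ 2) * iteratedDeriv 3 G x + 120 * x * iteratedDeriv 2 G x
        + 150 * deriv G x ≤ 150 / α) ∧
    (∀ x ∈ Set.Ioo (-1 : ℝ) 1,
      -15 * (1 - x ^ 2) * iteratedDeriv 3 G x + 120 * x * iteratedDeriv 2 G x
        + 160 * deriv G x ≤ 160 / α) := by
  obtain ⟨s, hs, hsub, hu_smooth⟩ := hu.1
  have hG_smooth : ContDiffOn ℝ ∞ G s :=
    ((contDiff_const.sub (contDiff_id.pow 2)).contDiffOn.mul
      (hu_smooth.deriv_of_isOpen hs le_rfl)).congr fun x _ => hG x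
  have hF : (fun y => (1 - y ^ 2) ^ 3 * deriv u y) = fun t => (1 - t ^ 2) ^ 2 * G t := by
    ext y
    rw [hG]
    ring
  have hM : ∀ t ∈ Ioo (-1 : ℝ) 1,
      iteratedDeriv 5 (fun t => (1 - t ^ 2) ^ 2 * G t) t ≤ 120 / α :=
    fun t ht => hF ▸ hu.iteratedDeriv_five_le hα ht
  refine ⟨fun x hx => ?_, fun x hx => ?_⟩
  · exact (Ghat_le hs hsub hG_smooth hM hx).trans_eq (by ring)
  · exact (Gtilde_le hs hsub hG_smooth hM hx).trans_eq (by ring)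
end
end

section
/- Let g : [-1,1] → ℝ be a nonnegative integrable function with ∫_{-1}^{1} g = 1 and ∫_{-1}^{1} x g(x) dx = 0. Set a = ∫_{-1}^{1} (1-x²) g, a_+ = ∫_{0}^{1} (1-x²) g, a_- = ∫_{-1}^{0} (1-x²) g, and assume a_+ ≥ a_- and a ≤ 0.221. Then |∫_{-1}^{1} x(1-x²) g(x) dx| ≤ a_+ - a_+², and |∫_{-1}^{1} (1/8)(11x² - 3)x·(1-x²) g(x) dx| ≤ (a_+ - a_+²) - (11/4)(a_+ - a_+²)² + a_- /(4√11). -/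
/-!
Split `[-1, 1]` at `0` and reflect the left half: the weights `w₊ = g` and `w₋ = g(-·)` on
`[0, 1]` satisfy `∫ w₊ + ∫ w₋ = 1` and `∫ x w₊ = ∫ x w₋`, hence `∫ (1 + x) w± ≤ 1`. Both
integrands are odd, so `A₂ = B₊ - B₋` and `A₄ = D₊ - D₋` with `B = ∫ x (1 - x²) w` and
`D = ∫ F̃₄'(x) (1 - x²) w = B - (11/8) ∫ x (1 - x²)² w`.

On each half, with `a = ∫ (1 - x²) w`, Cauchy–Schwarz gives
`a² ≤ ∫ (1 + x) w · ∫ (1 + x)(1 - x)² w ≤ a - B`, so `0 ≤ B ≤ a - a²`; and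
`B² ≤ ∫ x w · ∫ x (1 - x²)² w` with `∫ x w ≤ 1/2`, so `D ≤ B - (11/4) B² ≤ φ(a - a²)` for
`φ(t) = t - (11/4) t²`, which increases up to `2/11`. From below, `D ≥ -a/(4√11)` because
`F̃₄' ≥ -1/(4√11)` on `[0, ∞)`. Finally, since `a₊ + a₋` is small,
`φ(a₊ - a₊²) - φ(a₋ - a₋²) ≥ (a₊ - a₋)/(4√11)`, which moves `a₊/(4√11)` over to the `φ(a₊ - a₊²)`
side in the lower bound for `A₄`.
-/

open Real MeasureTheory intervalIntegral Set Polynomial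

noncomputable section

def moment (w : ℝ → ℝ) (c d : ℝ) (p : ℝ[X]) : ℝ := ∫ x in c..d, p.eval x * w x

section Moment

variable {w : ℝ → ℝ} {c d : ℝ}

theorem IntervalIntegrable.eval_mul (hw : IntervalIntegrable w volume c d) (p : ℝ[X]) :
    IntervalIntegrable (fun x => p.eval x * w x) volume c d :=
  hw.continuousOn_mul p.continuous.continuousOn

theorem moment_add (hw : IntervalIntegrable w volume c d) (p q : ℝ[X]) :
    moment w c d (p + q) = moment w c d p + moment w c d q := by
  simp only [moment, eval_add, add_mul]
  exact intervalIntegral.integral_add (hw.eval_mul p) (hw.eval_mul q)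

theorem moment_sub (hw : IntervalIntegrable w volume c d) (p q : ℝ[X]) :
    moment w c d (p - q) = moment w c d p - moment w c d q := by
  simp only [moment, eval_sub, sub_mul]
  exact intervalIntegral.integral_sub (hw.eval_mul p) (hw.eval_mul q)

theorem moment_C_mul (a : ℝ) (p : ℝ[X]) : moment w c d (C a * p) = a * moment w c d p := by
  simp only [moment, eval_mul, eval_C, mul_assoc, intervalIntegral.integral_const_mul]

theorem moment_neg (p : ℝ[X]) : moment w c d (-p) = -moment w c d p := by
  simp only [moment, eval_neg, neg_mul, intervalIntegral.integral_neg]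

theorem moment_nonneg (hcd : c ≤ d) (hw0 : ∀ x ∈ Icc c d, 0 ≤ w x) {p : ℝ[X]}
    (hp : ∀ x ∈ Icc c d, 0 ≤ p.eval x) : 0 ≤ moment w c d p :=
  intervalIntegral.integral_nonneg hcd fun x hx => mul_nonneg (hp x hx) (hw0 x hx)

theorem moment_mono (hcd : c ≤ d) (hw0 : ∀ x ∈ Icc c d, 0 ≤ w x)
    (hw : IntervalIntegrable w volume c d) {p q : ℝ[X]}
    (hpq : ∀ x ∈ Icc c d, p.eval x ≤ q.eval x) : moment w c d p ≤ moment w c d q :=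
  intervalIntegral.integral_mono_on hcd (hw.eval_mul p) (hw.eval_mul q) fun x hx =>
    mul_le_mul_of_nonneg_right (hpq x hx) (hw0 x hx)

theorem sq_moment_mul_le (hcd : c ≤ d) (hw0 : ∀ x ∈ Icc c d, 0 ≤ w x)
    (hw : IntervalIntegrable w volume c d) {p : ℝ[X]} (hp : ∀ x ∈ Icc c d, 0 ≤ p.eval x)
    (q : ℝ[X]) :
    moment w c d (p * q) ^ 2 ≤ moment w c d p * moment w c d (p * q ^ 2) := by
  have hquad : ∀ t : ℝ, 0 ≤ moment w c d p * (t * t) + -(2 * moment w c d (p * q)) * t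
      + moment w c d (p * q ^ 2) := fun t => by
    have hexp : p * (C t - q) ^ 2 = C t * (C t * p - (p * q + p * q)) + p * q ^ 2 := by ring
    have hnonneg : 0 ≤ moment w c d (p * (C t - q) ^ 2) :=
      moment_nonneg hcd hw0 fun x hx => by simpa using mul_nonneg (hp x hx) (sq_nonneg _)
    rw [hexp, moment_add hw, moment_C_mul, moment_sub hw, moment_C_mul, moment_add hw] at hnonneg
    linarith
  have := discrim_le_zero hquad
  rw [discrim] at this
  linarith

theorem moment_add_adjacent {e : ℝ} (hcd : IntervalIntegrable w volume c d)
    (hde : IntervalIntegrable w volume d e) (p : ℝ[X]) :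
    moment w c d p + moment w d e p = moment w c e p :=
  intervalIntegral.integral_add_adjacent_intervals (hcd.eval_mul p) (hde.eval_mul p)

theorem moment_neg_one_zero (p : ℝ[X]) :
    moment w (-1) 0 p = moment (fun x => w (-x)) 0 1 (p.comp (-X)) := by
  simp only [moment, eval_comp, eval_neg, eval_X]
  rw [intervalIntegral.integral_comp_neg (fun x => p.eval x * w x), neg_zero]

theorem moment_neg_one_one (hw : IntervalIntegrable w volume (-1) 1) (p : ℝ[X]) :
    moment w (-1) 1 p = moment w 0 1 p + moment (fun x => w (-x)) 0 1 (p.comp (-X)) := by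
  have hsub : ∀ c ∈ Icc (-1 : ℝ) 1, ∀ d ∈ Icc (-1 : ℝ) 1, IntervalIntegrable w volume c d :=
    fun c hc d hd => hw.mono_set (uIcc_subset_uIcc (by simpa using hc) (by simpa using hd))
  rw [← moment_add_adjacent (hsub (-1) (by norm_num) 0 (by norm_num))
    (hsub 0 (by norm_num) 1 (by norm_num)), moment_neg_one_zero, add_comm]

theorem moment_neg_one_one_of_even (hw : IntervalIntegrable w volume (-1) 1) {p : ℝ[X]}
    (hp : p.comp (-X) = p) :
    moment w (-1) 1 p = moment w 0 1 p + moment (fun x => w (-x)) 0 1 p := by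
  rw [moment_neg_one_one hw, hp]

theorem moment_neg_one_one_of_odd (hw : IntervalIntegrable w volume (-1) 1) {p : ℝ[X]}
    (hp : p.comp (-X) = -p) :
    moment w (-1) 1 p = moment w 0 1 p - moment (fun x => w (-x)) 0 1 p := by
  rw [moment_neg_one_one hw, hp, moment_neg, sub_eq_add_neg]

end Moment

-- `F̃₄'`, the derivative of the Gegenbauer polynomial `F₄ = F₄^{5/2}` normalized by `F̃₄'(1) = 1`
def gegenbauerDeriv4 : ℝ[X] := C (1 / 8) * (11 * X ^ 2 - 3) * X

theorem gegenbauerDeriv4_mul_one_sub_X_sq :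
    gegenbauerDeriv4 * (1 - X ^ 2) = X * (1 - X ^ 2) - C (11 / 8) * (X * (1 - X ^ 2) ^ 2) :=
  Polynomial.funext fun x => by simp [gegenbauerDeriv4]; ring

theorem neg_le_eval_gegenbauerDeriv4 {x : ℝ} (hx : 0 ≤ x) :
    -(1 / (4 * √11)) ≤ gegenbauerDeriv4.eval x := by
  have hr : √11 ^ 2 = 11 := sq_sqrt (by norm_num)
  simp only [gegenbauerDeriv4, eval_mul, eval_C, eval_sub, eval_pow, eval_X, eval_ofNat]
  have hinv : 1 / (4 * √11) = √11 / 44 := by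
    rw [div_eq_div_iff (by positivity) (by norm_num)]
    linarith
  -- the minimum on `[0, ∞)` is at `x = 1/√11`: with `t = √11 x`, `F̃₄'(x) + 1/(4√11)` is
  -- `√11 (t³ - 3t + 2) / 88 = √11 (t - 1)² (t + 2) / 88`
  have hcubic : 1 / 8 * (11 * x ^ 2 - 3) * x + √11 / 44
      = √11 * ((√11 * x - 1) ^ 2 * (√11 * x + 2)) / 88 := by
    linear_combination ((3 * x - (√11 ^ 2 + 11) * x ^ 3) / 88) * hr
  rw [neg_le_iff_add_nonneg, hinv, hcubic]
  positivity

section HalfInterval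

variable {w : ℝ → ℝ}

theorem moment_one_add_X_le_one {w' : ℝ → ℝ} (hw : IntervalIntegrable w volume 0 1)
    (hw'0 : ∀ x ∈ Icc (0 : ℝ) 1, 0 ≤ w' x) (hw' : IntervalIntegrable w' volume 0 1)
    (hmass : moment w 0 1 1 + moment w' 0 1 1 = 1)
    (hcenter : moment w 0 1 X = moment w' 0 1 X) : moment w 0 1 (1 + X) ≤ 1 := by
  have : 0 ≤ moment w' 0 1 (1 - X) := moment_nonneg zero_le_one hw'0 fun x hx => by simp [hx.2]
  rw [moment_add hw]
  rw [moment_sub hw'] at this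
  linarith

theorem moment_one_sub_X_sq_nonneg (hw0 : ∀ x ∈ Icc (0 : ℝ) 1, 0 ≤ w x) :
    0 ≤ moment w 0 1 (1 - X ^ 2) :=
  moment_nonneg zero_le_one hw0 fun x hx => by
    simpa using (by nlinarith [hx.1, hx.2] : 0 ≤ 1 - x ^ 2)

theorem moment_X_mul_one_sub_X_sq_nonneg (hw0 : ∀ x ∈ Icc (0 : ℝ) 1, 0 ≤ w x) :
    0 ≤ moment w 0 1 (X * (1 - X ^ 2)) :=
  moment_nonneg zero_le_one hw0 fun x hx => by
    simpa using mul_nonneg hx.1 (by nlinarith [hx.1, hx.2] : 0 ≤ 1 - x ^ 2)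

theorem moment_X_mul_one_sub_X_sq_le (hw0 : ∀ x ∈ Icc (0 : ℝ) 1, 0 ≤ w x)
    (hw : IntervalIntegrable w volume 0 1) (hmass : moment w 0 1 (1 + X) ≤ 1) :
    moment w 0 1 (X * (1 - X ^ 2)) ≤ moment w 0 1 (1 - X ^ 2) - moment w 0 1 (1 - X ^ 2) ^ 2 := by
  have hsplit : (1 - X) * (1 - X ^ 2) = (1 - X ^ 2 : ℝ[X]) - X * (1 - X ^ 2) := by ring
  have hcs := sq_moment_mul_le zero_le_one hw0 hw (p := 1 + X)
    (fun x hx => by simp; linarith [hx.1]) (1 - X)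
  rw [show (1 + X) * (1 - X) = (1 - X ^ 2 : ℝ[X]) by ring,
    show (1 + X) * (1 - X) ^ 2 = (1 - X) * (1 - X ^ 2 : ℝ[X]) by ring] at hcs
  have hrest : 0 ≤ moment w 0 1 ((1 - X) * (1 - X ^ 2)) :=
    moment_nonneg zero_le_one hw0 fun x hx => by
      simpa using mul_nonneg (sub_nonneg.2 hx.2) (by nlinarith [hx.1, hx.2] : 0 ≤ 1 - x ^ 2)
  rw [hsplit, moment_sub hw (1 - X ^ 2)] at hcs hrest
  nlinarith

theorem neg_div_le_moment_gegenbauerDeriv4 (hw0 : ∀ x ∈ Icc (0 : ℝ) 1, 0 ≤ w x)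
    (hw : IntervalIntegrable w volume 0 1) :
    -(moment w 0 1 (1 - X ^ 2) / (4 * √11)) ≤ moment w 0 1 (gegenbauerDeriv4 * (1 - X ^ 2)) := by
  calc -(moment w 0 1 (1 - X ^ 2) / (4 * √11))
      = moment w 0 1 (C (-(1 / (4 * √11))) * (1 - X ^ 2)) := by rw [moment_C_mul]; ring
    _ ≤ moment w 0 1 (gegenbauerDeriv4 * (1 - X ^ 2)) :=
      moment_mono zero_le_one hw0 hw fun x hx => by
        simpa using mul_le_mul_of_nonneg_right (neg_le_eval_gegenbauerDeriv4 hx.1)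
          (by nlinarith [hx.1, hx.2] : 0 ≤ 1 - x ^ 2)

theorem moment_gegenbauerDeriv4_le (hw0 : ∀ x ∈ Icc (0 : ℝ) 1, 0 ≤ w x)
    (hw : IntervalIntegrable w volume 0 1) (hmass : moment w 0 1 (1 + X) ≤ 1)
    (hsmall : moment w 0 1 (1 - X ^ 2) - moment w 0 1 (1 - X ^ 2) ^ 2 ≤ 2 / 11) :
    moment w 0 1 (gegenbauerDeriv4 * (1 - X ^ 2)) ≤
      (moment w 0 1 (1 - X ^ 2) - moment w 0 1 (1 - X ^ 2) ^ 2)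
        - 11 / 4 * (moment w 0 1 (1 - X ^ 2) - moment w 0 1 (1 - X ^ 2) ^ 2) ^ 2 := by
  set s := moment w 0 1 (1 - X ^ 2) - moment w 0 1 (1 - X ^ 2) ^ 2
  set B := moment w 0 1 (X * (1 - X ^ 2))
  have hBs : B ≤ s := moment_X_mul_one_sub_X_sq_le hw0 hw hmass
  have hcs : B ^ 2 ≤ moment w 0 1 X * moment w 0 1 (X * (1 - X ^ 2) ^ 2) :=
    sq_moment_mul_le zero_le_one hw0 hw (fun x hx => by simpa using hx.1) _
  have hC0 : 0 ≤ moment w 0 1 (X * (1 - X ^ 2) ^ 2) := moment_nonneg zero_le_one hw0 fun x hx => by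
    simpa using mul_nonneg hx.1 (sq_nonneg (1 - x ^ 2))
  have hfirst : 2 * moment w 0 1 X ≤ 1 := by
    have : 0 ≤ moment w 0 1 (1 - X) := moment_nonneg zero_le_one hw0 fun x hx => by simp [hx.2]
    rw [moment_add hw] at hmass
    rw [moment_sub hw] at this
    linarith
  rw [gegenbauerDeriv4_mul_one_sub_X_sq, moment_sub hw, moment_C_mul]
  -- `t ↦ t - 11/4 t²` is increasing on `t ≤ 2/11`
  nlinarith [mul_nonneg (sub_nonneg.2 hBs) (by linarith : 0 ≤ 1 - 11 / 4 * (s + B))]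

end HalfInterval

theorem div_four_sqrt_eleven_le_sub {ap am : ℝ} (ham : 0 ≤ am) (hord : am ≤ ap)
    (hsmall : ap + am ≤ 0.221) :
    (ap - am) / (4 * √11) ≤
      ((ap - ap ^ 2) - 11 / 4 * (ap - ap ^ 2) ^ 2)
        - ((am - am ^ 2) - 11 / 4 * (am - am ^ 2) ^ 2) := by
  have hsqrt : (12 : ℝ) ≤ 4 * √11 := by
    have : (3 : ℝ) ≤ √11 := Real.le_sqrt_of_sq_le (by norm_num)
    linarith
  have hfactor : ((ap - ap ^ 2) - 11 / 4 * (ap - ap ^ 2) ^ 2)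
      - ((am - am ^ 2) - 11 / 4 * (am - am ^ 2) ^ 2)
      = (ap - am) * ((1 - (ap + am)) * (1 - 11 / 4 * ((ap - ap ^ 2) + (am - am ^ 2)))) := by ring
  have hprod : 1 / 12 ≤ (1 - (ap + am)) * (1 - 11 / 4 * ((ap - ap ^ 2) + (am - am ^ 2))) := by
    nlinarith [sq_nonneg ap, sq_nonneg am]
  calc (ap - am) / (4 * √11) ≤ (ap - am) / 12 :=
        div_le_div_of_nonneg_left (by linarith) (by norm_num) hsqrt
    _ = (ap - am) * (1 / 12) := by ring
    _ ≤ _ := by rw [hfactor]; exact mul_le_mul_of_nonneg_left hprod (by linarith)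

theorem moment_gegenbauer_estimates_of_halves {wR wL : ℝ → ℝ}
    (hwR0 : ∀ x ∈ Icc (0 : ℝ) 1, 0 ≤ wR x) (hwR : IntervalIntegrable wR volume 0 1)
    (hwL0 : ∀ x ∈ Icc (0 : ℝ) 1, 0 ≤ wL x) (hwL : IntervalIntegrable wL volume 0 1)
    (hmass : moment wR 0 1 1 + moment wL 0 1 1 = 1) (hcenter : moment wR 0 1 X = moment wL 0 1 X)
    (hord : moment wL 0 1 (1 - X ^ 2) ≤ moment wR 0 1 (1 - X ^ 2))
    (hsmall : moment wR 0 1 (1 - X ^ 2) + moment wL 0 1 (1 - X ^ 2) ≤ 0.221) :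
    |moment wR 0 1 (X * (1 - X ^ 2)) - moment wL 0 1 (X * (1 - X ^ 2))| ≤
        moment wR 0 1 (1 - X ^ 2) - moment wR 0 1 (1 - X ^ 2) ^ 2 ∧
      |moment wR 0 1 (gegenbauerDeriv4 * (1 - X ^ 2))
          - moment wL 0 1 (gegenbauerDeriv4 * (1 - X ^ 2))| ≤
        (moment wR 0 1 (1 - X ^ 2) - moment wR 0 1 (1 - X ^ 2) ^ 2)
          - 11 / 4 * (moment wR 0 1 (1 - X ^ 2) - moment wR 0 1 (1 - X ^ 2) ^ 2) ^ 2
          + moment wL 0 1 (1 - X ^ 2) / (4 * √11) := by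
  set ap := moment wR 0 1 (1 - X ^ 2)
  set am := moment wL 0 1 (1 - X ^ 2)
  have hfirstR := moment_one_add_X_le_one hwR hwL0 hwL hmass hcenter
  have hfirstL := moment_one_add_X_le_one hwL hwR0 hwR (by linarith) hcenter.symm
  have hap0 : 0 ≤ ap := moment_one_sub_X_sq_nonneg hwR0
  have ham0 : 0 ≤ am := moment_one_sub_X_sq_nonneg hwL0
  have hsp : ap - ap ^ 2 ≤ 2 / 11 := by nlinarith
  have hsm : am - am ^ 2 ≤ 2 / 11 := by nlinarith
  constructor
  · exact abs_sub_le_of_nonneg_of_le (moment_X_mul_one_sub_X_sq_nonneg hwR0)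
      (moment_X_mul_one_sub_X_sq_le hwR0 hwR hfirstR) (moment_X_mul_one_sub_X_sq_nonneg hwL0)
      ((moment_X_mul_one_sub_X_sq_le hwL0 hwL hfirstL).trans (by nlinarith))
  · have hgap := div_four_sqrt_eleven_le_sub ham0 hord (by linarith)
    rw [sub_div] at hgap
    have hDR := moment_gegenbauerDeriv4_le hwR0 hwR hfirstR hsp
    have hDL := moment_gegenbauerDeriv4_le hwL0 hwL hfirstL hsm
    have hDR' := neg_div_le_moment_gegenbauerDeriv4 hwR0 hwR
    have hDL' := neg_div_le_moment_gegenbauerDeriv4 hwL0 hwL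
    rw [abs_le]
    constructor <;> linarith

/-- estimates of the Gegenbauer coefficients `A_2` and `A_4` for a nonnegative
integrable `g` on `[-1,1]` with `∫ g = 1`, `∫ x g = 0`. -/
theorem A2_A4_estimates (g : ℝ → ℝ) (a ap am : ℝ)
    (hg0 : ∀ x ∈ Set.Icc (-1 : ℝ) 1, 0 ≤ g x)
    (hgi : IntervalIntegrable g volume (-1) 1)
    (hmass : (∫ x in (-1 : ℝ)..1, g x) = 1)
    (hcenter : (∫ x in (-1 : ℝ)..1, x * g x) = 0)
    (ha : a = ∫ x in (-1 : ℝ)..1, (1 - x ^ 2) * g x)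
    (hap : ap = ∫ x in (0 : ℝ)..1, (1 - x ^ 2) * g x)
    (ham : am = ∫ x in (-1 : ℝ)..0, (1 - x ^ 2) * g x)
    (hord : am ≤ ap) (hsmall : a ≤ 0.221) :
    |∫ x in (-1 : ℝ)..1, x * (1 - x ^ 2) * g x| ≤ ap - ap ^ 2 ∧
    |∫ x in (-1 : ℝ)..1, (1 / 8) * (11 * x ^ 2 - 3) * x * (1 - x ^ 2) * g x| ≤
      (ap - ap ^ 2) - (11 / 4) * (ap - ap ^ 2) ^ 2 + am / (4 * Real.sqrt 11) := by
  have hgR0 : ∀ x ∈ Icc (0 : ℝ) 1, 0 ≤ g x := fun x hx => hg0 x ⟨by linarith [hx.1], hx.2⟩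
  have hgL0 : ∀ x ∈ Icc (0 : ℝ) 1, 0 ≤ g (-x) := fun x hx =>
    hg0 (-x) ⟨by linarith [hx.2], by linarith [hx.1]⟩
  have hgR : IntervalIntegrable g volume 0 1 := hgi.mono_set (uIcc_subset_uIcc (by simp) (by simp))
  have hgL : IntervalIntegrable (fun x => g (-x)) volume 0 1 := by
    simpa using ((IntervalIntegrable.iff_comp_neg (f := g)).mp
      (hgi.mono_set (uIcc_subset_uIcc (by simp) (by simp) : uIcc (-1 : ℝ) 0 ⊆ _))).symm
  have hap' : ap = moment g 0 1 (1 - X ^ 2) := by simpa [moment] using hap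
  have ham' : am = moment (fun x => g (-x)) 0 1 (1 - X ^ 2) := by
    rw [← (by simp : (1 - X ^ 2 : ℝ[X]).comp (-X) = 1 - X ^ 2), ← moment_neg_one_zero, ham]
    simp [moment]
  have hA2 : ∫ x in (-1 : ℝ)..1, x * (1 - x ^ 2) * g x = moment g (-1) 1 (X * (1 - X ^ 2)) := by
    simp [moment]
  have hA4 : ∫ x in (-1 : ℝ)..1, (1 / 8) * (11 * x ^ 2 - 3) * x * (1 - x ^ 2) * g x
      = moment g (-1) 1 (gegenbauerDeriv4 * (1 - X ^ 2)) := by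
    simp [moment, gegenbauerDeriv4]
  rw [hA2, hA4, moment_neg_one_one_of_odd hgi (by simp),
    moment_neg_one_one_of_odd hgi (by simp [gegenbauerDeriv4]), hap', ham']
  refine moment_gegenbauer_estimates_of_halves hgR0 hgR hgL0 hgL ?_ ?_ (hap' ▸ ham' ▸ hord) ?_
  · rw [← moment_neg_one_one_of_even hgi (by simp)]
    simpa [moment] using hmass
  · rw [← sub_eq_zero, ← moment_neg_one_one_of_odd hgi (by simp)]
    simpa [moment] using hcenter
  · rw [← moment_neg_one_one_of_even hgi (by simp)]
    simpa [moment, ha] using hsmall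
end
end

section
/- Let g : [-1,1] → ℝ be a nonnegative integrable function with ∫_{-1}^{1} g = 1 and ∫_{-1}^{1} x g(x) dx = 0. Set a = ∫_{-1}^{1} (1-x²) g, a_+ = ∫_{0}^{1} (1-x²) g, a_- = ∫_{-1}^{0} (1-x²) g, and assume a_+ ≥ a_- and 0 < a ≤ 0.125. Then |∫_{-1}^{1} (1/8)(9x² - 1)·(1-x²) g(x) dx| ≤ a - (9/4)·(a_+² + a_-²)/(a+1), and |∫_{-1}^{1} (1/80)(143x⁴ - 66x² + 3)·(1-x²) g(x) dx| ≤ a - 11(a_+² + a_-²)/(2(a+1)) + 143(a_+³ + a_-³)/(10(a+1)²). -/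
open Real MeasureTheory intervalIntegral Set

noncomputable section

/-- pointwise bounds -/
private lemma pt3ub (x t : ℝ) :
    1 / 8 * (9 * x ^ 2 - 1) * (1 - x ^ 2) ≤ (1 - 9 / 4 * t) * (1 - x ^ 2) + 9 / 8 * t ^ 2 := by
  nlinarith [sq_nonneg (1 - x ^ 2 - t)]

private lemma pt3lb (x : ℝ) (h1 : -1 ≤ x) (h2 : x ≤ 1) :
    (-(1/8)) * (1 - x ^ 2) + 0 ≤ 1 / 8 * (9 * x ^ 2 - 1) * (1 - x ^ 2) := by
  nlinarith [mul_nonneg (mul_nonneg (sq_nonneg x) (by linarith : (0:ℝ) ≤ 1 - x))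
    (by linarith : (0:ℝ) ≤ 1 + x)]

set_option maxHeartbeats 800000 in
private lemma pt5ub (x t : ℝ) (h1 : -1 ≤ x) (h2 : x ≤ 1) (ht : t ≤ 2/9) :
    1 / 80 * (143 * x ^ 4 - 66 * x ^ 2 + 3) * (1 - x ^ 2)
      ≤ (1 + (-(11/2) * t + 429/80 * t ^ 2)) * (1 - x ^ 2)
        + (11/4 * t ^ 2 - 143/40 * t ^ 3) := by
  have h20 : (0:ℝ) ≤ 20/13 - (1 - x ^ 2) - 2 * t := by linarith [sq_nonneg x]
  nlinarith [mul_nonneg (sq_nonneg (1 - x ^ 2 - t)) h20]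

private lemma pt5lb (x : ℝ) (h1 : -1 ≤ x) (h2 : x ≤ 1) :
    (-(3/52)) * (1 - x ^ 2) + 0 ≤ 1 / 80 * (143 * x ^ 4 - 66 * x ^ 2 + 3) * (1 - x ^ 2) := by
  have hu : (0:ℝ) ≤ (1 - x) * (1 + x) :=
    mul_nonneg (by linarith) (by linarith)
  nlinarith [mul_nonneg (sq_nonneg (x ^ 2 - 3/13)) hu]

set_option maxHeartbeats 1600000 in
/-- arithmetic assembly for the `A_3` bound -/
private lemma assembleA3 (a ap am mp mm t1 t2 S3 : ℝ)
    (haa : a = am + ap) (hap0 : 0 ≤ ap) (ham0 : 0 ≤ am) (hpos : 0 < a) (hsmall : a ≤ 0.125)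
    (h2mp : 2 * mp ≤ 1 + a) (h2mm : 2 * mm ≤ 1 + a)
    (ht1 : t1 = 2 * ap / (a + 1)) (ht2 : t2 = 2 * am / (a + 1))
    (hub3 : S3 ≤ (1 - 9 / 4 * t2) * am + 9 / 8 * t2 ^ 2 * mm
      + ((1 - 9 / 4 * t1) * ap + 9 / 8 * t1 ^ 2 * mp))
    (hlb3 : (-(1/8)) * am + 0 * mm + ((-(1/8)) * ap + 0 * mp) ≤ S3) :
    |S3| ≤ a - (9 / 4) * (ap ^ 2 + am ^ 2) / (a + 1) := by
  have ha1 : (0 : ℝ) < a + 1 := by linarith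
  have hb3p : 9 / 8 * t1 ^ 2 * mp ≤ 9 / 16 * t1 ^ 2 * (1 + a) := by
    nlinarith [mul_le_mul_of_nonneg_left (show mp ≤ (1+a)/2 by linarith) (sq_nonneg t1)]
  have hb3m : 9 / 8 * t2 ^ 2 * mm ≤ 9 / 16 * t2 ^ 2 * (1 + a) := by
    nlinarith [mul_le_mul_of_nonneg_left (show mm ≤ (1+a)/2 by linarith) (sq_nonneg t2)]
  have hid3 : (1 - 9 / 4 * t1) * ap + 9 / 16 * t1 ^ 2 * (1 + a)
      + ((1 - 9 / 4 * t2) * am + 9 / 16 * t2 ^ 2 * (1 + a))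
      = (ap + am) - 9 / 4 * (ap ^ 2 + am ^ 2) / (a + 1) := by
    rw [ht1, ht2]
    field_simp
    ring
  have haps : a * a ≤ a * 0.125 := mul_le_mul_of_nonneg_left hsmall hpos.le
  have hsq : a * a = (am + ap) * (am + ap) := by rw [haa]
  have hpm : 0 ≤ ap * am := mul_nonneg hap0 ham0
  rw [abs_le]
  constructor
  · have hkey : 9 / 4 * (ap ^ 2 + am ^ 2) / (a + 1) ≤ 7 / 8 * a := by
      rw [div_le_iff₀ ha1]
      nlinarith [haps, hsq, hpm, hpos]
    linarith only [hlb3, haa, hkey]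
  · linarith only [hub3, hb3p, hb3m, hid3, haa]

set_option maxHeartbeats 1600000 in
/-- arithmetic assembly for the `A_5` bound -/
private lemma assembleA5 (a ap am mp mm t1 t2 S5 : ℝ)
    (haa : a = am + ap) (hap0 : 0 ≤ ap) (ham0 : 0 ≤ am) (hpos : 0 < a) (hsmall : a ≤ 0.125)
    (h2mp : 2 * mp ≤ 1 + a) (h2mm : 2 * mm ≤ 1 + a)
    (ht1 : t1 = 2 * ap / (a + 1)) (ht2 : t2 = 2 * am / (a + 1))
    (ht19 : t1 ≤ 2/9) (ht29 : t2 ≤ 2/9)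
    (hub5 : S5 ≤ (1 + (-(11/2) * t2 + 429/80 * t2 ^ 2)) * am
        + (11/4 * t2 ^ 2 - 143/40 * t2 ^ 3) * mm
      + ((1 + (-(11/2) * t1 + 429/80 * t1 ^ 2)) * ap
        + (11/4 * t1 ^ 2 - 143/40 * t1 ^ 3) * mp))
    (hlb5 : (-(3/52)) * am + 0 * mm + ((-(3/52)) * ap + 0 * mp) ≤ S5) :
    |S5| ≤ a - 11 * (ap ^ 2 + am ^ 2) / (2 * (a + 1))
        + 143 * (ap ^ 3 + am ^ 3) / (10 * (a + 1) ^ 2) := by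
  have ha1 : (0 : ℝ) < a + 1 := by linarith
  have hc2p : (0:ℝ) ≤ 11/4 * t1 ^ 2 - 143/40 * t1 ^ 3 := by
    nlinarith [mul_le_mul_of_nonneg_left ht19 (sq_nonneg t1), sq_nonneg t1]
  have hc2m : (0:ℝ) ≤ 11/4 * t2 ^ 2 - 143/40 * t2 ^ 3 := by
    nlinarith [mul_le_mul_of_nonneg_left ht29 (sq_nonneg t2), sq_nonneg t2]
  have hb5p : (11/4 * t1 ^ 2 - 143/40 * t1 ^ 3) * mp
      ≤ (11/4 * t1 ^ 2 - 143/40 * t1 ^ 3) * ((1 + a) / 2) :=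
    mul_le_mul_of_nonneg_left (by linarith) hc2p
  have hb5m : (11/4 * t2 ^ 2 - 143/40 * t2 ^ 3) * mm
      ≤ (11/4 * t2 ^ 2 - 143/40 * t2 ^ 3) * ((1 + a) / 2) :=
    mul_le_mul_of_nonneg_left (by linarith) hc2m
  have hid5 : (1 + (-(11/2) * t1 + 429/80 * t1 ^ 2)) * ap
      + (11/4 * t1 ^ 2 - 143/40 * t1 ^ 3) * ((1 + a) / 2)
      + ((1 + (-(11/2) * t2 + 429/80 * t2 ^ 2)) * am
      + (11/4 * t2 ^ 2 - 143/40 * t2 ^ 3) * ((1 + a) / 2))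
      = (ap + am) - 11 * (ap ^ 2 + am ^ 2) / (2 * (a + 1))
        + 143 * (ap ^ 3 + am ^ 3) / (20 * (a + 1) ^ 2) := by
    rw [ht1, ht2]
    field_simp
    ring
  have haps : a * a ≤ a * 0.125 := mul_le_mul_of_nonneg_left hsmall hpos.le
  have hsq : a * a = (am + ap) * (am + ap) := by rw [haa]
  have hpm : 0 ≤ ap * am := mul_nonneg hap0 ham0
  rw [abs_le]
  constructor
  · have hT3 : (0:ℝ) ≤ 143 * (ap ^ 3 + am ^ 3) / (10 * (a + 1) ^ 2) := by
      apply div_nonneg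
      · linarith only [pow_nonneg hap0 3, pow_nonneg ham0 3]
      · positivity
    have hT2 : 11 * (ap ^ 2 + am ^ 2) / (2 * (a + 1)) ≤ 49 / 52 * a := by
      rw [div_le_iff₀ (by positivity : (0:ℝ) < 2 * (a + 1))]
      nlinarith [haps, hsq, hpm, hpos]
    linarith only [hlb5, haa, hT2, hT3]
  · have hcmp : 143 * (ap ^ 3 + am ^ 3) / (20 * (a + 1) ^ 2)
        ≤ 143 * (ap ^ 3 + am ^ 3) / (10 * (a + 1) ^ 2) := by
      have hnum : (0:ℝ) ≤ 143 * (ap ^ 3 + am ^ 3) := by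
        linarith only [pow_nonneg hap0 3, pow_nonneg ham0 3]
      gcongr
      norm_num
    linarith only [hub5, hb5p, hb5m, hid5, haa, hcmp]

set_option maxHeartbeats 1600000 in
/-- estimates of the Gegenbauer coefficients `A_3` and `A_5` for a nonnegative
integrable `g` on `[-1,1]` with `∫ g = 1`, `∫ x g = 0`. -/
theorem A3_A5_estimates (g : ℝ → ℝ) (a ap am : ℝ)
    (hg0 : ∀ x ∈ Set.Icc (-1 : ℝ) 1, 0 ≤ g x)
    (hgi : IntervalIntegrable g volume (-1) 1)
    (hmass : (∫ x in (-1 : ℝ)..1, g x) = 1)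
    (hcenter : (∫ x in (-1 : ℝ)..1, x * g x) = 0)
    (ha : a = ∫ x in (-1 : ℝ)..1, (1 - x ^ 2) * g x)
    (hap : ap = ∫ x in (0 : ℝ)..1, (1 - x ^ 2) * g x)
    (ham : am = ∫ x in (-1 : ℝ)..0, (1 - x ^ 2) * g x)
    (hord : am ≤ ap) (hpos : 0 < a) (hsmall : a ≤ 0.125) :
    |∫ x in (-1 : ℝ)..1, (1 / 8) * (9 * x ^ 2 - 1) * (1 - x ^ 2) * g x| ≤
      a - (9 / 4) * (ap ^ 2 + am ^ 2) / (a + 1) ∧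
    |∫ x in (-1 : ℝ)..1, (1 / 80) * (143 * x ^ 4 - 66 * x ^ 2 + 3) * (1 - x ^ 2) * g x| ≤
      a - 11 * (ap ^ 2 + am ^ 2) / (2 * (a + 1))
        + 143 * (ap ^ 3 + am ^ 3) / (10 * (a + 1) ^ 2) := by
  have hm1 : (-1 : ℝ) ∈ Icc (-1 : ℝ) 1 := by norm_num
  have hm0 : (0 : ℝ) ∈ Icc (-1 : ℝ) 1 := by norm_num
  have hm2 : (1 : ℝ) ∈ Icc (-1 : ℝ) 1 := by norm_num
  -- integrability of g on subintervals
  have hghalf : ∀ c d : ℝ, c ∈ Icc (-1 : ℝ) 1 → d ∈ Icc (-1 : ℝ) 1 →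
      IntervalIntegrable g volume c d := by
    intro c d hc hd
    refine hgi.mono_set (uIcc_subset_uIcc ?_ ?_) <;>
      rw [uIcc_of_le (show (-1 : ℝ) ≤ 1 by norm_num)] <;> assumption
  -- integrability of p * g
  have hgI : ∀ c d : ℝ, c ∈ Icc (-1 : ℝ) 1 → d ∈ Icc (-1 : ℝ) 1 → ∀ p : ℝ → ℝ, Continuous p →
      IntervalIntegrable (fun x => p x * g x) volume c d := by
    intro c d hc hd p hp
    exact (hghalf c d hc hd).continuousOn_mul hp.continuousOn
  -- monotone comparison of integrals against g
  have hmono : ∀ c d : ℝ, c ∈ Icc (-1 : ℝ) 1 → d ∈ Icc (-1 : ℝ) 1 → c ≤ d →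
      ∀ p q : ℝ → ℝ, Continuous p → Continuous q → (∀ x ∈ Icc c d, p x ≤ q x) →
      (∫ x in c..d, p x * g x) ≤ ∫ x in c..d, q x * g x := by
    intro c d hc hd hcd p q hp hq hpq
    refine intervalIntegral.integral_mono_on hcd (hgI c d hc hd p hp) (hgI c d hc hd q hq) ?_
    intro x hx
    exact mul_le_mul_of_nonneg_right (hpq x hx)
      (hg0 x ⟨le_trans hc.1 hx.1, le_trans hx.2 hd.2⟩)
  -- linearity
  have hlin : ∀ c d : ℝ, c ∈ Icc (-1 : ℝ) 1 → d ∈ Icc (-1 : ℝ) 1 →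
      ∀ p : ℝ → ℝ, Continuous p → ∀ α β : ℝ,
      (∫ x in c..d, (α * p x + β) * g x)
        = α * (∫ x in c..d, p x * g x) + β * (∫ x in c..d, g x) := by
    intro c d hc hd p hp α β
    have e1 : (fun x => (α * p x + β) * g x)
        = fun x => α * (p x * g x) + β * g x := by funext x; ring
    have i1 : IntervalIntegrable (fun x => α * (p x * g x)) volume c d :=
      (hgI c d hc hd p hp).const_mul α
    have i2 : IntervalIntegrable (fun x => β * g x) volume c d :=
      (hghalf c d hc hd).const_mul β
    rw [e1, intervalIntegral.integral_add i1 i2, intervalIntegral.integral_const_mul,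
      intervalIntegral.integral_const_mul]
  -- splits
  have hsplitg : (∫ x in (-1 : ℝ)..0, g x) + (∫ x in (0 : ℝ)..1, g x) = 1 := by
    rw [integral_add_adjacent_intervals (hghalf (-1) 0 hm1 hm0) (hghalf 0 1 hm0 hm2)]
    exact hmass
  have hsplitx : (∫ x in (-1 : ℝ)..0, x * g x) + (∫ x in (0 : ℝ)..1, x * g x) = 0 := by
    rw [integral_add_adjacent_intervals
      (hgI (-1) 0 hm1 hm0 (fun x => x) continuous_id)
      (hgI 0 1 hm0 hm2 (fun x => x) continuous_id)]
    exact hcenter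
  have haa : a = am + ap := by
    rw [ha, ham, hap]
    exact (integral_add_adjacent_intervals
      (hgI (-1) 0 hm1 hm0 (fun x => 1 - x ^ 2) (by fun_prop))
      (hgI 0 1 hm0 hm2 (fun x => 1 - x ^ 2) (by fun_prop))).symm
  have hsplit3 : (∫ x in (-1 : ℝ)..0, 1 / 8 * (9 * x ^ 2 - 1) * (1 - x ^ 2) * g x)
      + (∫ x in (0 : ℝ)..1, 1 / 8 * (9 * x ^ 2 - 1) * (1 - x ^ 2) * g x)
      = ∫ x in (-1 : ℝ)..1, 1 / 8 * (9 * x ^ 2 - 1) * (1 - x ^ 2) * g x :=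
    integral_add_adjacent_intervals
      (hgI (-1) 0 hm1 hm0 (fun x => 1 / 8 * (9 * x ^ 2 - 1) * (1 - x ^ 2)) (by fun_prop))
      (hgI 0 1 hm0 hm2 (fun x => 1 / 8 * (9 * x ^ 2 - 1) * (1 - x ^ 2)) (by fun_prop))
  have hsplit5 : (∫ x in (-1 : ℝ)..0, 1 / 80 * (143 * x ^ 4 - 66 * x ^ 2 + 3) * (1 - x ^ 2) * g x)
      + (∫ x in (0 : ℝ)..1, 1 / 80 * (143 * x ^ 4 - 66 * x ^ 2 + 3) * (1 - x ^ 2) * g x)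
      = ∫ x in (-1 : ℝ)..1, 1 / 80 * (143 * x ^ 4 - 66 * x ^ 2 + 3) * (1 - x ^ 2) * g x :=
    integral_add_adjacent_intervals
      (hgI (-1) 0 hm1 hm0 (fun x => 1 / 80 * (143 * x ^ 4 - 66 * x ^ 2 + 3) * (1 - x ^ 2))
        (by fun_prop))
      (hgI 0 1 hm0 hm2 (fun x => 1 / 80 * (143 * x ^ 4 - 66 * x ^ 2 + 3) * (1 - x ^ 2))
        (by fun_prop))
  -- basic positivity
  have hap0 : 0 ≤ ap := by
    rw [hap]
    refine intervalIntegral.integral_nonneg (by norm_num) ?_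
    intro x hx
    refine mul_nonneg ?_ (hg0 x ⟨by linarith only [hx.1], hx.2⟩)
    have h1 : (0:ℝ) ≤ (1 - x) * (1 + x) :=
      mul_nonneg (by linarith only [hx.2]) (by linarith only [hx.1])
    linarith only [h1]
  have ham0 : 0 ≤ am := by
    rw [ham]
    refine intervalIntegral.integral_nonneg (by norm_num) ?_
    intro x hx
    refine mul_nonneg ?_ (hg0 x ⟨hx.1, by linarith only [hx.2]⟩)
    have h1 : (0:ℝ) ≤ (1 - x) * (1 + x) :=
      mul_nonneg (by linarith only [hx.2]) (by linarith only [hx.1])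
    linarith only [h1]
  have ha1 : (0 : ℝ) < a + 1 := by linarith only [hpos]
  -- mass bounds : 2 m± ≤ 1 + a
  have h2mp : 2 * (∫ x in (0 : ℝ)..1, g x) ≤ 1 + a := by
    have e1 : (∫ x in (0 : ℝ)..1, ((-1) * x + 1) * g x)
        = (-1) * (∫ x in (0 : ℝ)..1, x * g x) + 1 * (∫ x in (0 : ℝ)..1, g x) :=
      hlin 0 1 hm0 hm2 (fun x => x) continuous_id (-1) 1
    have e2 : (∫ x in (-1 : ℝ)..0, ((-1) * x + (-1)) * g x)
        = (-1) * (∫ x in (-1 : ℝ)..0, x * g x) + (-1) * (∫ x in (-1 : ℝ)..0, g x) :=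
      hlin (-1) 0 hm1 hm0 (fun x => x) continuous_id (-1) (-1)
    have c1 : (∫ x in (0 : ℝ)..1, ((-1) * x + 1) * g x)
        ≤ ∫ x in (0 : ℝ)..1, (1 - x ^ 2) * g x := by
      refine hmono 0 1 hm0 hm2 (by norm_num) _ _ (by fun_prop) (by fun_prop) ?_
      intro x hx
      have h1 : (0:ℝ) ≤ x * (1 - x) := mul_nonneg hx.1 (by linarith only [hx.2])
      nlinarith [h1]
    have c2 : (∫ x in (-1 : ℝ)..0, ((-1) * x + (-1)) * g x)
        ≤ ∫ x in (-1 : ℝ)..0, (1 - x ^ 2) * g x := by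
      refine hmono (-1) 0 hm1 hm0 (by norm_num) _ _ (by fun_prop) (by fun_prop) ?_
      intro x hx
      have h1 : (0:ℝ) ≤ (2 - x) * (1 + x) :=
        mul_nonneg (by linarith only [hx.2]) (by linarith only [hx.1])
      nlinarith [h1]
    rw [e1] at c1; rw [e2] at c2
    rw [← hap] at c1; rw [← ham] at c2
    linarith only [hsplitg, hsplitx, haa, c1, c2]
  have h2mm : 2 * (∫ x in (-1 : ℝ)..0, g x) ≤ 1 + a := by
    have e1 : (∫ x in (0 : ℝ)..1, (1 * x + (-1)) * g x)
        = 1 * (∫ x in (0 : ℝ)..1, x * g x) + (-1) * (∫ x in (0 : ℝ)..1, g x) :=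
      hlin 0 1 hm0 hm2 (fun x => x) continuous_id 1 (-1)
    have e2 : (∫ x in (-1 : ℝ)..0, (1 * x + 1) * g x)
        = 1 * (∫ x in (-1 : ℝ)..0, x * g x) + 1 * (∫ x in (-1 : ℝ)..0, g x) :=
      hlin (-1) 0 hm1 hm0 (fun x => x) continuous_id 1 1
    have c1 : (∫ x in (0 : ℝ)..1, (1 * x + (-1)) * g x)
        ≤ ∫ x in (0 : ℝ)..1, (1 - x ^ 2) * g x := by
      refine hmono 0 1 hm0 hm2 (by norm_num) _ _ (by fun_prop) (by fun_prop) ?_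
      intro x hx
      have h1 : (0:ℝ) ≤ (x + 2) * (1 - x) :=
        mul_nonneg (by linarith only [hx.1]) (by linarith only [hx.2])
      nlinarith [h1]
    have c2 : (∫ x in (-1 : ℝ)..0, (1 * x + 1) * g x)
        ≤ ∫ x in (-1 : ℝ)..0, (1 - x ^ 2) * g x := by
      refine hmono (-1) 0 hm1 hm0 (by norm_num) _ _ (by fun_prop) (by fun_prop) ?_
      intro x hx
      have h1 : (0:ℝ) ≤ (-x) * (1 + x) :=
        mul_nonneg (by linarith only [hx.2]) (by linarith only [hx.1])
      nlinarith [h1]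
    rw [e1] at c1; rw [e2] at c2
    rw [← hap] at c1; rw [← ham] at c2
    linarith only [hsplitg, hsplitx, haa, c1, c2]
  -- tangent points
  set t1 : ℝ := 2 * ap / (a + 1) with ht1def
  set t2 : ℝ := 2 * am / (a + 1) with ht2def
  have ht10 : 0 ≤ t1 := by
    rw [ht1def]; exact div_nonneg (by linarith only [hap0]) (le_of_lt ha1)
  have ht20 : 0 ≤ t2 := by
    rw [ht2def]; exact div_nonneg (by linarith only [ham0]) (le_of_lt ha1)
  have ht19 : t1 ≤ 2 / 9 := by
    rw [ht1def, div_le_iff₀ ha1]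
    linarith only [haa, ham0, hsmall]
  have ht29 : t2 ≤ 2 / 9 := by
    rw [ht2def, div_le_iff₀ ha1]
    linarith only [haa, hap0, hsmall]
  -- upper bounds for A3 halves
  have hub3p : (∫ x in (0 : ℝ)..1, 1 / 8 * (9 * x ^ 2 - 1) * (1 - x ^ 2) * g x)
      ≤ (1 - 9 / 4 * t1) * ap + 9 / 8 * t1 ^ 2 * (∫ x in (0 : ℝ)..1, g x) := by
    have h1 : (∫ x in (0 : ℝ)..1, 1 / 8 * (9 * x ^ 2 - 1) * (1 - x ^ 2) * g x)
        ≤ ∫ x in (0 : ℝ)..1, ((1 - 9 / 4 * t1) * (1 - x ^ 2) + 9 / 8 * t1 ^ 2) * g x := by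
      exact hmono 0 1 hm0 hm2 (by norm_num) _ _ (by fun_prop) (by fun_prop)
        (fun x _ => pt3ub x t1)
    have h2 : (∫ x in (0 : ℝ)..1, ((1 - 9 / 4 * t1) * (1 - x ^ 2) + 9 / 8 * t1 ^ 2) * g x)
        = (1 - 9 / 4 * t1) * (∫ x in (0 : ℝ)..1, (1 - x ^ 2) * g x)
          + 9 / 8 * t1 ^ 2 * (∫ x in (0 : ℝ)..1, g x) :=
      hlin 0 1 hm0 hm2 (fun x => 1 - x ^ 2) (by fun_prop) _ _
    rw [h2, ← hap] at h1
    exact h1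
  have hub3m : (∫ x in (-1 : ℝ)..0, 1 / 8 * (9 * x ^ 2 - 1) * (1 - x ^ 2) * g x)
      ≤ (1 - 9 / 4 * t2) * am + 9 / 8 * t2 ^ 2 * (∫ x in (-1 : ℝ)..0, g x) := by
    have h1 : (∫ x in (-1 : ℝ)..0, 1 / 8 * (9 * x ^ 2 - 1) * (1 - x ^ 2) * g x)
        ≤ ∫ x in (-1 : ℝ)..0, ((1 - 9 / 4 * t2) * (1 - x ^ 2) + 9 / 8 * t2 ^ 2) * g x := by
      exact hmono (-1) 0 hm1 hm0 (by norm_num) _ _ (by fun_prop) (by fun_prop)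
        (fun x _ => pt3ub x t2)
    have h2 : (∫ x in (-1 : ℝ)..0, ((1 - 9 / 4 * t2) * (1 - x ^ 2) + 9 / 8 * t2 ^ 2) * g x)
        = (1 - 9 / 4 * t2) * (∫ x in (-1 : ℝ)..0, (1 - x ^ 2) * g x)
          + 9 / 8 * t2 ^ 2 * (∫ x in (-1 : ℝ)..0, g x) :=
      hlin (-1) 0 hm1 hm0 (fun x => 1 - x ^ 2) (by fun_prop) _ _
    rw [h2, ← ham] at h1
    exact h1
  -- lower bounds for A3 halves
  have hlb3p : (-(1/8)) * ap + 0 * (∫ x in (0 : ℝ)..1, g x)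
      ≤ ∫ x in (0 : ℝ)..1, 1 / 8 * (9 * x ^ 2 - 1) * (1 - x ^ 2) * g x := by
    have h1 : (∫ x in (0 : ℝ)..1, ((-(1/8)) * (1 - x ^ 2) + 0) * g x)
        ≤ ∫ x in (0 : ℝ)..1, 1 / 8 * (9 * x ^ 2 - 1) * (1 - x ^ 2) * g x := by
      exact hmono 0 1 hm0 hm2 (by norm_num) _ _ (by fun_prop) (by fun_prop)
        (fun x hx => pt3lb x (by linarith only [hx.1]) hx.2)
    have h2 : (∫ x in (0 : ℝ)..1, ((-(1/8)) * (1 - x ^ 2) + 0) * g x)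
        = (-(1/8)) * (∫ x in (0 : ℝ)..1, (1 - x ^ 2) * g x) + 0 * (∫ x in (0 : ℝ)..1, g x) :=
      hlin 0 1 hm0 hm2 (fun x => 1 - x ^ 2) (by fun_prop) _ _
    rw [h2, ← hap] at h1
    exact h1
  have hlb3m : (-(1/8)) * am + 0 * (∫ x in (-1 : ℝ)..0, g x)
      ≤ ∫ x in (-1 : ℝ)..0, 1 / 8 * (9 * x ^ 2 - 1) * (1 - x ^ 2) * g x := by
    have h1 : (∫ x in (-1 : ℝ)..0, ((-(1/8)) * (1 - x ^ 2) + 0) * g x)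
        ≤ ∫ x in (-1 : ℝ)..0, 1 / 8 * (9 * x ^ 2 - 1) * (1 - x ^ 2) * g x := by
      exact hmono (-1) 0 hm1 hm0 (by norm_num) _ _ (by fun_prop) (by fun_prop)
        (fun x hx => pt3lb x hx.1 (by linarith only [hx.2]))
    have h2 : (∫ x in (-1 : ℝ)..0, ((-(1/8)) * (1 - x ^ 2) + 0) * g x)
        = (-(1/8)) * (∫ x in (-1 : ℝ)..0, (1 - x ^ 2) * g x) + 0 * (∫ x in (-1 : ℝ)..0, g x) :=
      hlin (-1) 0 hm1 hm0 (fun x => 1 - x ^ 2) (by fun_prop) _ _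
    rw [h2, ← ham] at h1
    exact h1
  -- upper bounds for A5 halves
  have hub5p : (∫ x in (0 : ℝ)..1, 1 / 80 * (143 * x ^ 4 - 66 * x ^ 2 + 3) * (1 - x ^ 2) * g x)
      ≤ (1 + (-(11/2) * t1 + 429/80 * t1 ^ 2)) * ap
        + (11/4 * t1 ^ 2 - 143/40 * t1 ^ 3) * (∫ x in (0 : ℝ)..1, g x) := by
    have h1 : (∫ x in (0 : ℝ)..1, 1 / 80 * (143 * x ^ 4 - 66 * x ^ 2 + 3) * (1 - x ^ 2) * g x)
        ≤ ∫ x in (0 : ℝ)..1, ((1 + (-(11/2) * t1 + 429/80 * t1 ^ 2)) * (1 - x ^ 2)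
            + (11/4 * t1 ^ 2 - 143/40 * t1 ^ 3)) * g x := by
      exact hmono 0 1 hm0 hm2 (by norm_num) _ _ (by fun_prop) (by fun_prop)
        (fun x hx => pt5ub x t1 (by linarith only [hx.1]) hx.2 ht19)
    have h2 : (∫ x in (0 : ℝ)..1, ((1 + (-(11/2) * t1 + 429/80 * t1 ^ 2)) * (1 - x ^ 2)
            + (11/4 * t1 ^ 2 - 143/40 * t1 ^ 3)) * g x)
        = (1 + (-(11/2) * t1 + 429/80 * t1 ^ 2)) * (∫ x in (0 : ℝ)..1, (1 - x ^ 2) * g x)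
          + (11/4 * t1 ^ 2 - 143/40 * t1 ^ 3) * (∫ x in (0 : ℝ)..1, g x) :=
      hlin 0 1 hm0 hm2 (fun x => 1 - x ^ 2) (by fun_prop) _ _
    rw [h2, ← hap] at h1
    exact h1
  have hub5m : (∫ x in (-1 : ℝ)..0, 1 / 80 * (143 * x ^ 4 - 66 * x ^ 2 + 3) * (1 - x ^ 2) * g x)
      ≤ (1 + (-(11/2) * t2 + 429/80 * t2 ^ 2)) * am
        + (11/4 * t2 ^ 2 - 143/40 * t2 ^ 3) * (∫ x in (-1 : ℝ)..0, g x) := by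
    have h1 : (∫ x in (-1 : ℝ)..0, 1 / 80 * (143 * x ^ 4 - 66 * x ^ 2 + 3) * (1 - x ^ 2) * g x)
        ≤ ∫ x in (-1 : ℝ)..0, ((1 + (-(11/2) * t2 + 429/80 * t2 ^ 2)) * (1 - x ^ 2)
            + (11/4 * t2 ^ 2 - 143/40 * t2 ^ 3)) * g x := by
      exact hmono (-1) 0 hm1 hm0 (by norm_num) _ _ (by fun_prop) (by fun_prop)
        (fun x hx => pt5ub x t2 hx.1 (by linarith only [hx.2]) ht29)
    have h2 : (∫ x in (-1 : ℝ)..0, ((1 + (-(11/2) * t2 + 429/80 * t2 ^ 2)) * (1 - x ^ 2)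
            + (11/4 * t2 ^ 2 - 143/40 * t2 ^ 3)) * g x)
        = (1 + (-(11/2) * t2 + 429/80 * t2 ^ 2)) * (∫ x in (-1 : ℝ)..0, (1 - x ^ 2) * g x)
          + (11/4 * t2 ^ 2 - 143/40 * t2 ^ 3) * (∫ x in (-1 : ℝ)..0, g x) :=
      hlin (-1) 0 hm1 hm0 (fun x => 1 - x ^ 2) (by fun_prop) _ _
    rw [h2, ← ham] at h1
    exact h1
  -- lower bounds for A5 halves
  have hlb5p : (-(3/52)) * ap + 0 * (∫ x in (0 : ℝ)..1, g x)
      ≤ ∫ x in (0 : ℝ)..1, 1 / 80 * (143 * x ^ 4 - 66 * x ^ 2 + 3) * (1 - x ^ 2) * g x := by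
    have h1 : (∫ x in (0 : ℝ)..1, ((-(3/52)) * (1 - x ^ 2) + 0) * g x)
        ≤ ∫ x in (0 : ℝ)..1, 1 / 80 * (143 * x ^ 4 - 66 * x ^ 2 + 3) * (1 - x ^ 2) * g x := by
      exact hmono 0 1 hm0 hm2 (by norm_num) _ _ (by fun_prop) (by fun_prop)
        (fun x hx => pt5lb x (by linarith only [hx.1]) hx.2)
    have h2 : (∫ x in (0 : ℝ)..1, ((-(3/52)) * (1 - x ^ 2) + 0) * g x)
        = (-(3/52)) * (∫ x in (0 : ℝ)..1, (1 - x ^ 2) * g x) + 0 * (∫ x in (0 : ℝ)..1, g x) :=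
      hlin 0 1 hm0 hm2 (fun x => 1 - x ^ 2) (by fun_prop) _ _
    rw [h2, ← hap] at h1
    exact h1
  have hlb5m : (-(3/52)) * am + 0 * (∫ x in (-1 : ℝ)..0, g x)
      ≤ ∫ x in (-1 : ℝ)..0, 1 / 80 * (143 * x ^ 4 - 66 * x ^ 2 + 3) * (1 - x ^ 2) * g x := by
    have h1 : (∫ x in (-1 : ℝ)..0, ((-(3/52)) * (1 - x ^ 2) + 0) * g x)
        ≤ ∫ x in (-1 : ℝ)..0, 1 / 80 * (143 * x ^ 4 - 66 * x ^ 2 + 3) * (1 - x ^ 2) * g x := by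
      exact hmono (-1) 0 hm1 hm0 (by norm_num) _ _ (by fun_prop) (by fun_prop)
        (fun x hx => pt5lb x hx.1 (by linarith only [hx.2]))
    have h2 : (∫ x in (-1 : ℝ)..0, ((-(3/52)) * (1 - x ^ 2) + 0) * g x)
        = (-(3/52)) * (∫ x in (-1 : ℝ)..0, (1 - x ^ 2) * g x) + 0 * (∫ x in (-1 : ℝ)..0, g x) :=
      hlin (-1) 0 hm1 hm0 (fun x => 1 - x ^ 2) (by fun_prop) _ _
    rw [h2, ← ham] at h1
    exact h1
  constructor
  · refine assembleA3 a ap am (∫ x in (0 : ℝ)..1, g x) (∫ x in (-1 : ℝ)..0, g x) t1 t2 _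
      haa hap0 ham0 hpos hsmall h2mp h2mm ht1def ht2def ?_ ?_
    · rw [← hsplit3]
      linarith only [hub3p, hub3m]
    · rw [← hsplit3]
      linarith only [hlb3p, hlb3m]
  · refine assembleA5 a ap am (∫ x in (0 : ℝ)..1, g x) (∫ x in (-1 : ℝ)..0, g x) t1 t2 _
      haa hap0 ham0 hpos hsmall h2mp h2mm ht1def ht2def ht19 ht29 ?_ ?_
    · rw [← hsplit5]
      linarith only [hub5p, hub5m]
    · rw [← hsplit5]
      linarith only [hlb5p, hlb5m]
end
end

section
/- Let n ≥ 2 be an integer, let ν ≥ 2 be a real number, and define v(θ) = sin²θ · F_n^ν(cos θ) for θ ∈ (0, π/2). If 0 < θ₁ < θ₂ < π/2 are both local maximum points of the function θ ↦ |v(θ)| on (0, π/2), then |v(θ₁)| > |v(θ₂)|; that is, the successive relative maxima of |v| form an increasing sequence as θ decreases from π/2 to 0. -/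
open Real MeasureTheory intervalIntegral Set

noncomputable section

/-- The Gegenbauer polynomial `C_k^ν` via the Rodrigues formula. -/
def gegenbauerC (ν : ℝ) (k : ℕ) (x : ℝ) : ℝ :=
  ((-1 : ℝ) ^ k / (2 ^ k * (Nat.factorial k : ℝ))) *
    (Real.Gamma (ν + 1 / 2) * Real.Gamma ((k : ℝ) + 2 * ν) /
      (Real.Gamma (2 * ν) * Real.Gamma (ν + (k : ℝ) + 1 / 2))) *
    (1 - x ^ 2) ^ ((1 : ℝ) / 2 - ν) *
    iteratedDeriv k (fun y : ℝ => (1 - y ^ 2) ^ ((k : ℝ) + ν - 1 / 2)) x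

/-- The normalization `F_k^ν` of `C_k^ν` with `F_k^ν(1) = 1`. -/
def gegenbauerF (ν : ℝ) (k : ℕ) (x : ℝ) : ℝ :=
  ((Nat.factorial k : ℝ) * Real.Gamma (2 * ν) / Real.Gamma ((k : ℝ) + 2 * ν)) * gegenbauerC ν k x

/-- `λ_k = k (k+5)`. -/
def lamb (k : ℕ) : ℝ := k * (k + 5)

/-- `F̃_k'(x) = (720/(λ_k(λ_k+4)(λ_k+6))) C_{k-1}^{7/2}(x)`, the derivative of `F_k^{5/2}`
rescaled so that `F̃_k'(1) = 1`. -/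
def tildeFd (k : ℕ) (x : ℝ) : ℝ :=
  (720 / (lamb k * (lamb k + 4) * (lamb k + 6))) * gegenbauerC (7 / 2) (k - 1) x

/-!
By Rodrigues' formula `F_n^ν` is, on `(-1, 1)`, a nonzero polynomial `P` solving the Gegenbauer
equation, and then `v(θ) = sin²θ · P(cos θ)` solves the Sturm–Liouville equation
`(p v')' + p Q v = 0` with `p = sin^(2ν-4) θ` and the increasing potential
`Q = n(n+2ν) + 4ν - 4 - (4ν-6)/sin²θ`. At a relative maximum of `|v|` the potential is positive:
otherwise `p v'` increases to its zero there, so `|v|` decreases towards the point. Hence `Q > 0`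
from `θ₁` on, where `(p · pQ)' > 0`, and the Sonin–Pólya energy `v² + (p v')² / (p · pQ)`
decreases strictly; at critical points of `v` it equals `v²`.
-/

open Filter Topology

theorem IsLocalMax.hasDerivAt_eq_zero_of_abs {f : ℝ → ℝ} {f' a : ℝ}
    (h : IsLocalMax (fun t => |f t|) a) (hf : HasDerivAt f f' a) : f' = 0 := by
  rcases le_total 0 (f a) with ha | ha
  · refine IsLocalMax.hasDerivAt_eq_zero ?_ hf
    filter_upwards [h] with t ht
    exact (le_abs_self _).trans (ht.trans_eq (abs_of_nonneg ha))
  · refine IsLocalMin.hasDerivAt_eq_zero ?_ hf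
    filter_upwards [h] with t ht
    linarith [neg_le_abs (f t), ht.trans_eq (abs_of_nonpos ha)]

section SturmLiouville

variable {p q y y' : ℝ → ℝ} {a b : ℝ}

def soninPolyaEnergy (p q y y' : ℝ → ℝ) (t : ℝ) : ℝ :=
  y t ^ 2 + (p t * y' t) ^ 2 / (p t * q t)

theorem hasDerivAt_soninPolyaEnergy {r t : ℝ} (hy : HasDerivAt y (y' t) t)
    (hpy : HasDerivAt (fun s => p s * y' s) (-(q t * y t)) t)
    (hpq : HasDerivAt (fun s => p s * q s) r t) (hp : p t ≠ 0) (hq : q t ≠ 0) :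
    HasDerivAt (soninPolyaEnergy p q y y') (-((p t * y' t) ^ 2 * r / (p t * q t) ^ 2)) t := by
  refine ((hy.fun_pow 2).fun_add ((hpy.fun_pow 2).fun_div hpq (mul_ne_zero hp hq))).congr_deriv ?_
  field_simp
  ring

theorem abs_lt_abs_of_sonin_polya (hab : a < b)
    (hy : ∀ t ∈ Icc a b, HasDerivAt y (y' t) t)
    (hpy : ∀ t ∈ Icc a b, HasDerivAt (fun s => p s * y' s) (-(q t * y t)) t)
    (hpq : ∀ t ∈ Icc a b, DifferentiableAt ℝ (fun s => p s * q s) t)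
    (hp : ∀ t ∈ Icc a b, p t ≠ 0) (hq : ∀ t ∈ Icc a b, q t ≠ 0)
    (hr : ∀ t ∈ Ioo a b, 0 < deriv (fun s => p s * q s) t)
    (ha : y' a = 0) (hb : y' b = 0) (hne : ∃ t ∈ Ioo a b, y t ≠ 0) :
    |y b| < |y a| := by
  set E := soninPolyaEnergy p q y y'
  have hE : ∀ t ∈ Icc a b, HasDerivAt E
      (-((p t * y' t) ^ 2 * deriv (fun s => p s * q s) t / (p t * q t) ^ 2)) t := fun t ht =>
    hasDerivAt_soninPolyaEnergy (hy t ht) (hpy t ht) (hpq t ht).hasDerivAt (hp t ht) (hq t ht)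
  have hanti : AntitoneOn E (Icc a b) := by
    refine antitoneOn_of_deriv_nonpos (convex_Icc a b)
      (fun t ht => (hE t ht).continuousAt.continuousWithinAt) ?_ ?_ <;>
      rw [interior_Icc] <;> intro t ht
    · exact (hE t (Ioo_subset_Icc_self ht)).differentiableAt.differentiableWithinAt
    · rw [(hE t (Ioo_subset_Icc_self ht)).deriv, neg_nonpos]
      have := (hr t ht).le
      positivity
  have hEa : E a = y a ^ 2 := by simp [E, soninPolyaEnergy, ha]
  have hEb : E b = y b ^ 2 := by simp [E, soninPolyaEnergy, hb]
  have haI : a ∈ Icc a b := left_mem_Icc.mpr hab.le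
  have hbI : b ∈ Icc a b := right_mem_Icc.mpr hab.le
  rw [← sq_lt_sq, ← hEa, ← hEb]
  refine (hanti haI hbI hab.le).lt_of_ne fun hEab => ?_
  obtain ⟨t, ht, hyt⟩ := hne
  -- Constant energy forces `p y' = 0` on `(a, b)`, hence `q y = 0` there.
  have hconst : ∀ s ∈ Icc a b, E s = E a := fun s hs =>
    le_antisymm (hanti haI hs hs.1) (hEab ▸ hanti hs hbI hs.2)
  have hpy0 : ∀ s ∈ Ioo a b, p s * y' s = 0 := by
    intro s hs
    have hE0 : HasDerivAt E 0 s := (hasDerivAt_const s (E a)).congr_of_eventuallyEq <|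
      eventually_of_mem (Ioo_mem_nhds hs.1 hs.2) fun u hu => hconst u (Ioo_subset_Icc_self hu)
    have := neg_eq_zero.mp ((hE s (Ioo_subset_Icc_self hs)).unique hE0)
    rw [div_eq_zero_iff, mul_eq_zero, or_iff_left (pow_ne_zero 2 (mul_ne_zero
      (hp s (Ioo_subset_Icc_self hs)) (hq s (Ioo_subset_Icc_self hs))))] at this
    exact pow_eq_zero_iff two_ne_zero |>.mp (this.resolve_right (hr s hs).ne')
  have hqy : q t * y t = 0 := by
    have h0 : HasDerivAt (fun s => p s * y' s) 0 t :=
      (hasDerivAt_const t 0).congr_of_eventuallyEq <|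
        eventually_of_mem (Ioo_mem_nhds ht.1 ht.2) hpy0
    exact neg_eq_zero.mp ((hpy t (Ioo_subset_Icc_self ht)).unique h0)
  exact hyt ((mul_eq_zero.mp hqy).resolve_left (hq t (Ioo_subset_Icc_self ht)))

theorem not_isLocalMax_abs_of_neg {θ : ℝ} (haθ : a < θ)
    (hy : ∀ t ∈ Ioc a θ, HasDerivAt y (y' t) t)
    (hpy : ∀ t ∈ Ioc a θ, HasDerivAt (fun s => p s * y' s) (-(q t * y t)) t)
    (hp : ∀ t ∈ Ioc a θ, 0 < p t) (hq : ∀ t ∈ Ioo a θ, q t < 0) (hyθ : y θ ≠ 0) :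
    ¬ IsLocalMax (fun t => |y t|) θ := by
  wlog hpos : 0 < y θ generalizing y y'
  · have := this (y := -y) (y' := -y') (fun t ht => (hy t ht).neg)
      (fun t ht => by simpa using (hpy t ht).fun_neg) (by simpa using hyθ)
      (by simpa using lt_of_le_of_ne (not_lt.mp hpos) hyθ)
    simpa using this
  intro hmax
  have hθ : θ ∈ Ioc a θ := right_mem_Ioc.mpr haθ
  have hy'θ : y' θ = 0 := hmax.hasDerivAt_eq_zero_of_abs (hy θ hθ)
  have hnear : {t | a < t ∧ y t ≤ y θ ∧ 0 < y t} ∈ 𝓝[<] θ := by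
    refine nhdsWithin_le_nhds ?_
    filter_upwards [Ioi_mem_nhds haθ, hmax, (hy θ hθ).continuousAt.eventually_mem
      (Ioi_mem_nhds hpos)] with t hat ht hyt
    exact ⟨hat, (le_abs_self _).trans (ht.trans_eq (abs_of_pos hpos)), hyt⟩
  obtain ⟨l, hl : l < θ, hsub⟩ := mem_nhdsLT_iff_exists_Ioo_subset.mp hnear
  obtain ⟨c, hc⟩ := exists_between hl
  have hcθ : Icc c θ ⊆ Ioc a θ := fun t ht => ⟨(hsub hc).1.trans_le ht.1, ht.2⟩
  have hcl : Ioo c θ ⊆ Ioo l θ := Ioo_subset_Ioo_left hc.1.le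
  have hmono : StrictMonoOn (fun s => p s * y' s) (Icc c θ) := by
    refine strictMonoOn_of_deriv_pos (convex_Icc c θ)
      (fun t ht => (hpy t (hcθ ht)).continuousAt.continuousWithinAt) fun t ht => ?_
    rw [interior_Icc] at ht
    rw [(hpy t (hcθ (Ioo_subset_Icc_self ht))).deriv, neg_pos]
    exact mul_neg_of_neg_of_pos (hq t ⟨(hsub (hcl ht)).1, ht.2⟩) (hsub (hcl ht)).2.2
  have hanti : StrictAntiOn y (Icc c θ) := by
    refine strictAntiOn_of_deriv_neg (convex_Icc c θ)
      (fun t ht => (hy t (hcθ ht)).continuousAt.continuousWithinAt) fun t ht => ?_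
    rw [interior_Icc] at ht
    have htI := Ioo_subset_Icc_self ht
    have hneg : p t * y' t < 0 := by
      simpa [hy'θ] using hmono htI (right_mem_Icc.mpr hc.2.le) ht.2
    rw [(hy t (hcθ htI)).deriv]
    exact neg_of_mul_neg_right hneg (hp t (hcθ htI)).le
  exact (hanti (left_mem_Icc.mpr hc.2.le) (right_mem_Icc.mpr hc.2.le) hc.2).not_ge (hsub hc).2.1

end SturmLiouville

open Polynomial

/-- `(d/dx)^j (1 - x²)^α = (1 - x²)^(α - j) · rodriguesPoly α j (x)` on `(-1, 1)`. -/
def rodriguesPoly (α : ℝ) : ℕ → ℝ[X]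
  | 0 => 1
  | j + 1 => (1 - X ^ 2) * derivative (rodriguesPoly α j) - C (2 * (α - j)) * X * rodriguesPoly α j

theorem iteratedDeriv_one_sub_sq_rpow (α : ℝ) (j : ℕ) {x : ℝ} (hx : x ∈ Ioo (-1 : ℝ) 1) :
    iteratedDeriv j (fun y : ℝ => (1 - y ^ 2) ^ α) x
      = (1 - x ^ 2) ^ (α - j) * (rodriguesPoly α j).eval x := by
  induction j generalizing x with
  | zero => simp [rodriguesPoly]
  | succ j ih =>
    have hpos : 0 < 1 - x ^ 2 := by nlinarith [hx.1, hx.2]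
    have hev : iteratedDeriv j (fun y : ℝ => (1 - y ^ 2) ^ α)
        =ᶠ[𝓝 x] fun y => (1 - y ^ 2) ^ (α - j) * (rodriguesPoly α j).eval y :=
      eventually_of_mem (isOpen_Ioo.mem_nhds hx) fun y hy => ih hy
    have hsq : HasDerivAt (fun y : ℝ => 1 - y ^ 2) (-(2 * x)) x := by
      simpa using (hasDerivAt_pow 2 x).const_sub 1
    have hderiv := (hsq.rpow_const (p := α - j) (Or.inl hpos.ne')).fun_mul
      ((rodriguesPoly α j).hasDerivAt x)
    rw [iteratedDeriv_succ, hev.deriv_eq, hderiv.deriv]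
    have hsplit : (1 - x ^ 2) ^ (α - j) = (1 - x ^ 2) ^ (α - j - 1) * (1 - x ^ 2) := by
      rw [← rpow_add_one hpos.ne']; ring_nf
    rw [show α - ((j + 1 : ℕ) : ℝ) = α - j - 1 by push_cast; ring, hsplit]
    simp only [rodriguesPoly, eval_sub, eval_mul, eval_one, eval_pow, eval_X, eval_C]
    ring

theorem rodriguesPoly_ode (α : ℝ) (j : ℕ) :
    (1 - X ^ 2) * derivative (derivative (rodriguesPoly α j))
      = C (2 * (α - j + 1)) * X * derivative (rodriguesPoly α j)
        - C ((j + 1) * (2 * α - j) - 2 * (α - j)) * rodriguesPoly α j := by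
  induction j with
  | zero => simp [rodriguesPoly]
  | succ j ih =>
    have ih' := congrArg derivative ih
    simp only [derivative_mul, derivative_sub, derivative_one, derivative_pow, derivative_X,
      derivative_C, rodriguesPoly, derivative_neg, derivative_add, zero_mul, zero_add, zero_sub,
      mul_one] at ih' ⊢
    push_cast at ih' ih ⊢
    simp only [map_sub, map_add, map_mul, map_one, map_ofNat] at ih' ih ⊢
    linear_combination (1 - X ^ 2) * ih' - (2 * (C α - C (j : ℝ)) * X) * ih

theorem rodriguesPoly_eval_one (α : ℝ) (j : ℕ) :
    (rodriguesPoly α j).eval 1 = ∏ i ∈ Finset.range j, (-2 * (α - i)) := by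
  induction j with
  | zero => simp [rodriguesPoly]
  | succ j ih => rw [Finset.prod_range_succ, ← ih]; simp [rodriguesPoly]; ring

theorem rodriguesPoly_ne_zero {α : ℝ} {j : ℕ} (hα : (j : ℝ) - 1 < α) :
    rodriguesPoly α j ≠ 0 := by
  refine fun h => ?_
  have h1 := rodriguesPoly_eval_one α j
  rw [h, eval_zero, eq_comm, Finset.prod_eq_zero_iff] at h1
  obtain ⟨i, hi, hzero⟩ := h1
  have : (i : ℝ) + 1 ≤ j := by exact_mod_cast Finset.mem_range.mp hi
  nlinarith

def SolvesGegenbauerEq (ν μ : ℝ) (P : ℝ[X]) : Prop :=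
  ∀ x, (1 - x ^ 2) * (derivative (derivative P)).eval x
    = (2 * ν + 1) * x * (derivative P).eval x - μ * P.eval x

theorem exists_poly_eq_gegenbauerF (n : ℕ) {ν : ℝ} (hν : 0 < ν) :
    ∃ P : ℝ[X], P ≠ 0 ∧ SolvesGegenbauerEq ν (n * (n + 2 * ν)) P ∧
      ∀ x ∈ Ioo (-1 : ℝ) 1, gegenbauerF ν n x = P.eval x := by
  set α : ℝ := n + ν - 1 / 2 with hα
  set K : ℝ := (n.factorial * Gamma (2 * ν) / Gamma (n + 2 * ν)) *
    ((-1) ^ n / (2 ^ n * n.factorial) *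
      (Gamma (ν + 1 / 2) * Gamma (n + 2 * ν) / (Gamma (2 * ν) * Gamma (ν + n + 1 / 2))))
  have hK : K ≠ 0 := by
    have := Gamma_pos_of_pos (by positivity : 0 < 2 * ν)
    have := Gamma_pos_of_pos (by positivity : 0 < (n : ℝ) + 2 * ν)
    have := Gamma_pos_of_pos (by positivity : 0 < ν + 1 / 2)
    have := Gamma_pos_of_pos (by positivity : 0 < ν + n + 1 / 2)
    positivity
  refine ⟨C K * rodriguesPoly α n, mul_ne_zero (C_ne_zero.mpr hK)
    (rodriguesPoly_ne_zero (by rw [hα]; linarith)), fun x => ?_, fun x hx => ?_⟩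
  · have h := congrArg (eval x) (rodriguesPoly_ode α n)
    simp only [eval_mul, eval_sub, eval_one, eval_pow, eval_X, eval_C] at h
    simp only [derivative_mul, derivative_C, zero_mul, zero_add, eval_mul, eval_C]
    linear_combination K * h
  · have hpos : 0 < 1 - x ^ 2 := by nlinarith [hx.1, hx.2]
    have hcollapse : (1 - x ^ 2) ^ ((1 : ℝ) / 2 - ν) * (1 - x ^ 2) ^ (α - n) = 1 := by
      rw [← rpow_add hpos, hα, show (1 : ℝ) / 2 - ν + (n + ν - 1 / 2 - n) = 0 by ring,
        rpow_zero]
    rw [gegenbauerF, gegenbauerC, iteratedDeriv_one_sub_sq_rpow α n hx, eval_mul, eval_C]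
    linear_combination K * (rodriguesPoly α n).eval x * hcollapse

theorem sin_pos_of_mem_Ioo_pi_div_two {t : ℝ} (ht : t ∈ Ioo 0 (π / 2)) : 0 < sin t :=
  sin_pos_of_pos_of_lt_pi ht.1 (ht.2.trans (by linarith [pi_pos]))

def sinSqEval (P : ℝ[X]) (t : ℝ) : ℝ := sin t ^ 2 * P.eval (cos t)

def sinSqEvalDeriv (P : ℝ[X]) (t : ℝ) : ℝ :=
  2 * sin t * cos t * P.eval (cos t) - sin t ^ 3 * (derivative P).eval (cos t)

def gegenbauerPotential (ν μ t : ℝ) : ℝ := μ + 4 * ν - 4 - (4 * ν - 6) / sin t ^ 2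

theorem hasDerivAt_eval_cos (P : ℝ[X]) (t : ℝ) :
    HasDerivAt (fun s => P.eval (cos s)) (-(sin t * (derivative P).eval (cos t))) t :=
  ((P.hasDerivAt (cos t)).comp t (hasDerivAt_cos t)).congr_deriv (by ring)

theorem hasDerivAt_sinSqEval (P : ℝ[X]) (t : ℝ) :
    HasDerivAt (sinSqEval P) (sinSqEvalDeriv P t) t := by
  refine (((hasDerivAt_sin t).fun_pow 2).fun_mul (hasDerivAt_eval_cos P t)).congr_deriv ?_
  simp only [sinSqEvalDeriv]
  ring

theorem hasDerivAt_sin_rpow {a t : ℝ} (ht : 0 < sin t) :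
    HasDerivAt (fun s => sin s ^ a) (a * cos t * sin t ^ a / sin t) t := by
  refine ((hasDerivAt_sin t).rpow_const (p := a) (Or.inl ht.ne')).congr_deriv ?_
  rw [rpow_sub_one ht.ne']
  ring

theorem hasDerivAt_gegenbauerPotential (ν μ : ℝ) {t : ℝ} (ht : sin t ≠ 0) :
    HasDerivAt (gegenbauerPotential ν μ) (2 * (4 * ν - 6) * cos t / sin t ^ 3) t := by
  refine ((hasDerivAt_const t (μ + 4 * ν - 4)).fun_sub ((hasDerivAt_const t (4 * ν - 6)).fun_div
    ((hasDerivAt_sin t).fun_pow 2) (pow_ne_zero 2 ht))).congr_deriv ?_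
  field_simp
  ring

theorem hasDerivAt_sin_rpow_mul_sinSqEvalDeriv {P : ℝ[X]} {ν μ : ℝ}
    (hP : SolvesGegenbauerEq ν μ P) {t : ℝ} (ht : 0 < sin t) :
    HasDerivAt (fun s => sin s ^ (2 * ν - 4) * sinSqEvalDeriv P s)
      (-(sin t ^ (2 * ν - 4) * gegenbauerPotential ν μ t * sinSqEval P t)) t := by
  have hV' : HasDerivAt (sinSqEvalDeriv P) ((2 * cos t ^ 2 - 2 * sin t ^ 2) * P.eval (cos t)
      - 5 * sin t ^ 2 * cos t * (derivative P).eval (cos t)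
      + sin t ^ 4 * (derivative (derivative P)).eval (cos t)) t := by
    refine (((((hasDerivAt_sin t).const_mul 2).fun_mul (hasDerivAt_cos t)).fun_mul
      (hasDerivAt_eval_cos P t)).fun_sub (((hasDerivAt_sin t).fun_pow 3).fun_mul
      (hasDerivAt_eval_cos (derivative P) t))).congr_deriv ?_
    ring
  refine ((hasDerivAt_sin_rpow ht).fun_mul hV').congr_deriv ?_
  have hode := hP (cos t)
  have hpyth := sin_sq_add_cos_sq t
  simp only [gegenbauerPotential, sinSqEval, sinSqEvalDeriv]
  field_simp
  linear_combination sin t ^ 2 * hode + (sin t ^ 2 * (derivative (derivative P)).eval (cos t)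
    + (4 * ν - 6) * P.eval (cos t)) * hpyth

theorem hasDerivAt_sin_rpow_sq_mul_gegenbauerPotential {ν μ t : ℝ} (ht : 0 < sin t) :
    HasDerivAt (fun s => sin s ^ (2 * ν - 4) * (sin s ^ (2 * ν - 4) * gegenbauerPotential ν μ s))
      ((sin t ^ (2 * ν - 4)) ^ 2 * (2 * (2 * ν - 4) * cos t / sin t * gegenbauerPotential ν μ t
        + 2 * (4 * ν - 6) * cos t / sin t ^ 3)) t := by
  have hp := hasDerivAt_sin_rpow (a := 2 * ν - 4) ht
  refine (hp.fun_mul (hp.fun_mul (hasDerivAt_gegenbauerPotential ν μ ht.ne'))).congr_deriv ?_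
  field_simp
  ring

theorem deriv_sin_rpow_sq_mul_gegenbauerPotential_pos {ν μ t : ℝ} (hν : 2 ≤ ν)
    (ht : t ∈ Ioo 0 (π / 2)) (hQ : 0 < gegenbauerPotential ν μ t) :
    0 < deriv (fun s => sin s ^ (2 * ν - 4) * (sin s ^ (2 * ν - 4) * gegenbauerPotential ν μ s))
      t := by
  have hs := sin_pos_of_mem_Ioo_pi_div_two ht
  have hc : 0 < cos t := cos_pos_of_mem_Ioo ⟨by linarith [ht.1, pi_pos], ht.2⟩
  rw [(hasDerivAt_sin_rpow_sq_mul_gegenbauerPotential hs).deriv]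
  have h1 : 0 ≤ 2 * (2 * ν - 4) * cos t / sin t * gegenbauerPotential ν μ t :=
    mul_nonneg (div_nonneg (mul_nonneg (by linarith) hc.le) hs.le) hQ.le
  have h2 : 0 < 2 * (4 * ν - 6) * cos t / sin t ^ 3 :=
    div_pos (mul_pos (by linarith) hc) (by positivity)
  have := rpow_pos_of_pos hs (2 * ν - 4)
  positivity

theorem gegenbauerPotential_strictMonoOn {ν : ℝ} (hν : 3 / 2 < ν) (μ : ℝ) :
    StrictMonoOn (gegenbauerPotential ν μ) (Ioo 0 (π / 2)) := by
  have hQ : ∀ t ∈ Ioo 0 (π / 2), HasDerivAt (gegenbauerPotential ν μ)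
      (2 * (4 * ν - 6) * cos t / sin t ^ 3) t := fun t ht =>
    hasDerivAt_gegenbauerPotential ν μ (sin_pos_of_mem_Ioo_pi_div_two ht).ne'
  refine strictMonoOn_of_deriv_pos (convex_Ioo 0 (π / 2))
    (fun t ht => (hQ t ht).continuousAt.continuousWithinAt) fun t ht => ?_
  rw [interior_Ioo] at ht
  rw [(hQ t ht).deriv]
  have := sin_pos_of_mem_Ioo_pi_div_two ht
  exact div_pos (mul_pos (by linarith) (cos_pos_of_mem_Ioo ⟨by linarith [ht.1, pi_pos], ht.2⟩))
    (by positivity)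

theorem finite_zeros_sinSqEval {P : ℝ[X]} (hP : P ≠ 0) :
    {t ∈ Ioo 0 π | sinSqEval P t = 0}.Finite := by
  refine Set.Finite.of_finite_image ((finite_setOfPred_isRoot hP).subset ?_)
    (injOn_cos.mono fun t ht => Ioo_subset_Icc_self ht.1)
  rintro _ ⟨t, ⟨ht, hzero⟩, rfl⟩
  exact (mul_eq_zero.mp hzero).resolve_left (pow_pos (sin_pos_of_pos_of_lt_pi ht.1 ht.2) 2).ne'

theorem sinSqEval_ne_zero_of_isLocalMax {P : ℝ[X]} (hP : P ≠ 0) {θ : ℝ} (hθ : θ ∈ Ioo 0 π)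
    (hmax : IsLocalMax (fun t => |sinSqEval P t|) θ) : sinSqEval P θ ≠ 0 := by
  intro hzero
  refine infinite_of_mem_nhds θ ?_ (finite_zeros_sinSqEval hP)
  filter_upwards [isOpen_Ioo.mem_nhds hθ, hmax] with t ht htmax
  exact ⟨ht, abs_nonpos_iff.mp (by simpa [hzero] using htmax)⟩

theorem exists_sinSqEval_ne_zero {P : ℝ[X]} (hP : P ≠ 0) {a b : ℝ} (ha : 0 ≤ a) (hab : a < b)
    (hb : b ≤ π) : ∃ t ∈ Ioo a b, sinSqEval P t ≠ 0 := by
  obtain ⟨t, ht, hnot⟩ := (Ioo_infinite hab).exists_notMem_finite (finite_zeros_sinSqEval hP)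
  exact ⟨t, ht, fun hzero => hnot ⟨⟨ha.trans_lt ht.1, ht.2.trans_le hb⟩, hzero⟩⟩

theorem abs_sinSqEval_lt_of_isLocalMax {P : ℝ[X]} {ν μ θ₁ θ₂ : ℝ} (hν : 2 ≤ ν) (hP0 : P ≠ 0)
    (hP : SolvesGegenbauerEq ν μ P) (h₁ : 0 < θ₁) (h₂ : θ₂ < π / 2) (hlt : θ₁ < θ₂)
    (hmax₁ : IsLocalMax (fun t => |sinSqEval P t|) θ₁)
    (hmax₂ : IsLocalMax (fun t => |sinSqEval P t|) θ₂) :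
    |sinSqEval P θ₂| < |sinSqEval P θ₁| := by
  have hQmono := gegenbauerPotential_strictMonoOn (by linarith : 3 / 2 < ν) μ
  have hsub : Icc θ₁ θ₂ ⊆ Ioo 0 (π / 2) := Icc_subset_Ioo h₁ h₂
  have hθ₁ : θ₁ ∈ Ioo 0 (π / 2) := hsub (left_mem_Icc.mpr hlt.le)
  have hV' : ∀ t ∈ Ioo 0 (π / 2), HasDerivAt
      (fun s => sin s ^ (2 * ν - 4) * sinSqEvalDeriv P s)
      (-(sin t ^ (2 * ν - 4) * gegenbauerPotential ν μ t * sinSqEval P t)) t := fun t ht =>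
    hasDerivAt_sin_rpow_mul_sinSqEvalDeriv hP (sin_pos_of_mem_Ioo_pi_div_two ht)
  have hp : ∀ t ∈ Ioo 0 (π / 2), 0 < sin t ^ (2 * ν - 4) := fun t ht =>
    rpow_pos_of_pos (sin_pos_of_mem_Ioo_pi_div_two ht) _
  have hQ₁ : 0 < gegenbauerPotential ν μ θ₁ := by
    by_contra! hQ
    have hIoc : Ioc 0 θ₁ ⊆ Ioo 0 (π / 2) := Ioc_subset_Ioo_right hθ₁.2
    refine not_isLocalMax_abs_of_neg h₁ (fun t _ => hasDerivAt_sinSqEval P t)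
      (fun t ht => hV' t (hIoc ht)) (fun t ht => hp t (hIoc ht)) (fun t ht => ?_)
      (sinSqEval_ne_zero_of_isLocalMax hP0 ⟨h₁, hθ₁.2.trans (by linarith [pi_pos])⟩ hmax₁) hmax₁
    have htI : t ∈ Ioo 0 (π / 2) := ⟨ht.1, ht.2.trans hθ₁.2⟩
    exact mul_neg_of_pos_of_neg (hp t htI) ((hQmono htI hθ₁ ht.2).trans_le hQ)
  have hQ : ∀ t ∈ Icc θ₁ θ₂, 0 < gegenbauerPotential ν μ t := fun t ht =>
    hQ₁.trans_le (hQmono.monotoneOn hθ₁ (hsub ht) ht.1)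
  refine abs_lt_abs_of_sonin_polya hlt (fun t _ => hasDerivAt_sinSqEval P t)
    (fun t ht => hV' t (hsub ht))
    (fun t ht => (hasDerivAt_sin_rpow_sq_mul_gegenbauerPotential
      (sin_pos_of_mem_Ioo_pi_div_two (hsub ht))).differentiableAt)
    (fun t ht => (hp t (hsub ht)).ne') (fun t ht => (mul_pos (hp t (hsub ht)) (hQ t ht)).ne')
    (fun t ht => deriv_sin_rpow_sq_mul_gegenbauerPotential_pos hν
      (hsub (Ioo_subset_Icc_self ht)) (hQ t (Ioo_subset_Icc_self ht)))
    (hmax₁.hasDerivAt_eq_zero_of_abs (hasDerivAt_sinSqEval P θ₁))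
    (hmax₂.hasDerivAt_eq_zero_of_abs (hasDerivAt_sinSqEval P θ₂))
    (exists_sinSqEval_ne_zero hP0 h₁.le hlt (h₂.le.trans (by linarith [pi_pos])))

theorem increasing_local_maxima_general (n : ℕ) (ν : ℝ) (hν : 2 ≤ ν)
    (θ₁ θ₂ : ℝ) (h₁ : θ₁ ∈ Set.Ioo 0 (Real.pi / 2)) (h₂ : θ₂ ∈ Set.Ioo 0 (Real.pi / 2))
    (hlt : θ₁ < θ₂)
    (hmax₁ : IsLocalMax (fun θ : ℝ => |Real.sin θ ^ 2 * gegenbauerF ν n (Real.cos θ)|) θ₁)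
    (hmax₂ : IsLocalMax (fun θ : ℝ => |Real.sin θ ^ 2 * gegenbauerF ν n (Real.cos θ)|) θ₂) :
    |Real.sin θ₂ ^ 2 * gegenbauerF ν n (Real.cos θ₂)| <
      |Real.sin θ₁ ^ 2 * gegenbauerF ν n (Real.cos θ₁)| := by
  obtain ⟨P, hP0, hP, hF⟩ := exists_poly_eq_gegenbauerF n (by linarith : 0 < ν)
  have hV : ∀ θ ∈ Ioo 0 (π / 2), sin θ ^ 2 * gegenbauerF ν n (cos θ) = sinSqEval P θ := by
    intro θ hθ
    have hc : 0 < cos θ := cos_pos_of_mem_Ioo ⟨by linarith [hθ.1, pi_pos], hθ.2⟩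
    have hc1 : cos θ < 1 := by
      nlinarith [sin_sq_add_cos_sq θ, pow_pos (sin_pos_of_mem_Ioo_pi_div_two hθ) 2]
    rw [hF (cos θ) ⟨by linarith, hc1⟩, sinSqEval]
  have hmax : ∀ θ ∈ Ioo 0 (π / 2),
      IsLocalMax (fun θ : ℝ => |sin θ ^ 2 * gegenbauerF ν n (cos θ)|) θ →
      IsLocalMax (fun t => |sinSqEval P t|) θ := fun θ hθ h =>
    h.congr (eventually_of_mem (isOpen_Ioo.mem_nhds hθ) fun t ht => congrArg abs (hV t ht))
  rw [hV θ₁ h₁, hV θ₂ h₂]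
  exact abs_sinSqEval_lt_of_isLocalMax hν hP0 hP h₁.1 h₂.2 hlt (hmax θ₁ h₁ hmax₁)
    (hmax θ₂ h₂ hmax₂)

/-- for `v(θ) = sin²θ · F_n^ν(cos θ)` with `n ≥ 2`, `ν ≥ 2`, the successive
relative maxima of `|v|` on `(0, π/2)` increase as `θ` decreases. -/
theorem increasing_local_maxima (n : ℕ) (ν : ℝ) (hn : 2 ≤ n) (hν : 2 ≤ ν)
    (θ₁ θ₂ : ℝ) (h₁ : θ₁ ∈ Set.Ioo 0 (Real.pi / 2)) (h₂ : θ₂ ∈ Set.Ioo 0 (Real.pi / 2))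
    (hlt : θ₁ < θ₂)
    (hmax₁ : IsLocalMax (fun θ : ℝ => |Real.sin θ ^ 2 * gegenbauerF ν n (Real.cos θ)|) θ₁)
    (hmax₂ : IsLocalMax (fun θ : ℝ => |Real.sin θ ^ 2 * gegenbauerF ν n (Real.cos θ)|) θ₂) :
    |Real.sin θ₂ ^ 2 * gegenbauerF ν n (Real.cos θ₂)| <
      |Real.sin θ₁ ^ 2 * gegenbauerF ν n (Real.cos θ₁)| :=
  increasing_local_maxima_general n ν hν θ₁ θ₂ h₁ h₂ hlt hmax₁ hmax₂
end
end
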